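/- arXiv:1510.05377 — 7 statements merged into one kernel-verified Lean document; each statement's English description precedes it below -/
import Mathlib

section
/- Let A be a unital C*-algebra and a, c, b ∈ A with Im a > 0 and Im c > 0, where Im x = (x − x*)/(2i). Then the block matrix [[a, b],[0, c]] has positive invertible imaginary part in M₂(A) if and only if ‖(Im a)^{-1/2} b (Im c)^{-1/2}‖ < 2, equivalently b* (Im a)^{-1} b < 4 Im c. -/
/-- The imaginary part `Im x = (x - x*)/(2i)` of an element of a complex star algebra. -/
noncomputable def imPart {B : Type*} [Ring B] [StarRing B] [Algebra ℂ B] (x : B) : B :=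
  ((2 * Complex.I)⁻¹ : ℂ) • (x - star x)

/-- An element of a complex star algebra is *positive and invertible* if it is selfadjoint
and its spectrum is contained in `(0, ∞)` (viewed inside `ℂ`). -/
def IsPosInvertibleSpec {B : Type*} [Ring B] [StarRing B] [Algebra ℂ B] (m : B) : Prop :=
  IsSelfAdjoint m ∧ ∀ z ∈ spectrum ℂ m, z.im = 0 ∧ 0 < z.re

section Helpers

lemma star_twoI_inv : (starRingEnd ℂ) (2 * Complex.I)⁻¹ = -(2 * Complex.I)⁻¹ := by
  simp [Complex.ext_iff]

variable {B : Type*} [Ring B] [StarRing B] [Algebra ℂ B] [StarModule ℂ B]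

lemma imPart_isSelfAdjoint (x : B) : IsSelfAdjoint (imPart x) := by
  unfold imPart
  rw [IsSelfAdjoint, star_smul, star_sub, star_star, Complex.star_def, star_twoI_inv,
    neg_smul, ← smul_neg, neg_sub]

lemma imPart_of_isSelfAdjoint {x : B} (hx : IsSelfAdjoint x) : imPart x = 0 := by
  unfold imPart
  rw [hx.star_eq, sub_self, smul_zero]

lemma imPart_star (x : B) : imPart (star x) = - imPart x := by
  unfold imPart
  rw [star_star, ← smul_neg, neg_sub]

lemma imPart_sub (x y : B) : imPart (x - y) = imPart x - imPart y := by
  unfold imPart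
  rw [star_sub, ← smul_sub]
  congr 1
  abel

lemma imPart_algebraMap (z : ℂ) : imPart (algebraMap ℂ B z) = (z.im : ℂ) • 1 := by
  unfold imPart
  rw [← algebraMap_star_comm, Complex.star_def, ← map_sub, Algebra.algebraMap_eq_smul_one,
    smul_smul]
  congr 1
  rw [Complex.sub_conj]
  field_simp
  push_cast
  ring

lemma imPart_conjugate (v x : B) : imPart (star v * x * v) = star v * imPart x * v := by
  unfold imPart
  rw [star_mul, star_mul, star_star, mul_smul_comm, smul_mul_assoc, mul_sub, sub_mul]
  simp [mul_assoc]

end Helpers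

section CStarHelpers

variable {A : Type*} [CStarAlgebra A] [PartialOrder A] [StarOrderedRing A]

lemma isUnit_of_sq {q α : A} (h : q * q = α) (hα : IsUnit α) : IsUnit q := by
  have hl : (Ring.inverse α * q) * q = 1 := by
    rw [mul_assoc, h, Ring.inverse_mul_cancel _ hα]
  have hr : q * (q * Ring.inverse α) = 1 := by
    rw [← mul_assoc, h, Ring.mul_inverse_cancel _ hα]
  have heq : Ring.inverse α * q = q * Ring.inverse α := by
    conv_lhs => rw [← mul_one (Ring.inverse α * q), ← hr]
    rw [← mul_assoc, hl, one_mul]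
  exact ⟨⟨q, q * Ring.inverse α, hr, by rw [← heq, hl]⟩, rfl⟩

lemma inverse_mul_self {q : A} (hq : IsUnit q) :
    Ring.inverse q * Ring.inverse q = Ring.inverse (q * q) := by
  obtain ⟨u, rfl⟩ := hq
  rw [← Units.val_mul, Ring.inverse_unit, Ring.inverse_unit, mul_inv_rev, Units.val_mul]

lemma real_smul_nonneg {r : ℝ} (hr : 0 ≤ r) {x : A} (hx : 0 ≤ x) : 0 ≤ r • x := by
  have hx' : CFC.sqrt x * CFC.sqrt x = x := CFC.sqrt_mul_sqrt_self x hx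
  have key : r • x = star (Real.sqrt r • CFC.sqrt x) * (Real.sqrt r • CFC.sqrt x) := by
    rw [star_smul, star_trivial, (IsSelfAdjoint.of_nonneg (CFC.sqrt_nonneg x)).star_eq,
      smul_mul_smul_comm, hx', Real.mul_self_sqrt hr]
  rw [key]
  exact star_mul_self_nonneg _

lemma complex_smul_nonneg {r : ℝ} (hr : 0 ≤ r) {x : A} (hx : 0 ≤ x) : 0 ≤ (r : ℂ) • x := by
  have : (r : ℂ) • x = r • x := by
    rw [← algebraMap_smul ℂ (r : ℝ) x]
    norm_cast
  rw [this]
  exact real_smul_nonneg hr hx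

lemma isUnit_complex_smul_iff {c : ℂ} (hc : c ≠ 0) {x : A} : IsUnit (c • x) ↔ IsUnit x := by
  have hu : IsUnit ((c • 1 : A)) := by
    rw [isUnit_iff_exists]
    exact ⟨c⁻¹ • 1, by rw [smul_mul_smul_comm, mul_one, mul_inv_cancel₀ hc, one_smul],
      by rw [smul_mul_smul_comm, mul_one, inv_mul_cancel₀ hc, one_smul]⟩
  have h2 := Units.isUnit_units_mul hu.unit x
  rw [IsUnit.unit_spec] at h2
  rw [show c • x = (c • 1 : A) * x by rw [smul_mul_assoc, one_mul]]
  exact h2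

end CStarHelpers
section CStarHelpers2

variable {A : Type*} [CStarAlgebra A] [PartialOrder A] [StarOrderedRing A]

lemma algebraMap_real_nonneg {r : ℝ} (hr : 0 ≤ r) : (0 : A) ≤ algebraMap ℝ A r := by
  rw [Algebra.algebraMap_eq_smul_one]
  exact real_smul_nonneg hr (by simpa using star_mul_self_nonneg (1 : A))

lemma algebraMap_real_mono {r s : ℝ} (h : r ≤ s) :
    algebraMap ℝ A r ≤ algebraMap ℝ A s := by
  rw [← sub_nonneg, ← map_sub]
  exact algebraMap_real_nonneg (by linarith)

lemma posUnit_of_algebraMap_le {δ : ℝ} (hδ : 0 < δ) {t : A} (h : algebraMap ℝ A δ ≤ t) :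
    0 ≤ t ∧ IsUnit t := by
  have hu : IsUnit (algebraMap ℝ A δ) := (isUnit_iff_ne_zero.mpr hδ.ne').map (algebraMap ℝ A)
  have h0 : (0 : A) ≤ algebraMap ℝ A δ := algebraMap_real_nonneg hδ.le
  exact ⟨h0.trans h, CStarAlgebra.isUnit_of_le _ h (hu.isStrictlyPositive h0)⟩

/-- key lemma: if the imaginary part of `s` is nonnegative and invertible, `s` is invertible. -/
lemma isUnit_of_imPart_posUnit {s : A} (h1 : 0 ≤ imPart s) (h2 : IsUnit (imPart s)) :
    IsUnit s := by
  set n := imPart s with hn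
  have hq : CFC.sqrt n * CFC.sqrt n = n := CFC.sqrt_mul_sqrt_self n h1
  set q := CFC.sqrt n with hqdef
  have hqu : IsUnit q := isUnit_of_sq hq h2
  have hqsa : IsSelfAdjoint q := IsSelfAdjoint.of_nonneg (CFC.sqrt_nonneg n)
  set e := Ring.inverse q with he
  have hesa : star e = e := by rw [he, ← Ring.inverse_star, hqsa.star_eq]
  have heq : e * q = 1 := Ring.inverse_mul_cancel _ hqu
  have hqe : q * e = 1 := Ring.mul_inverse_cancel _ hqu
  set t := e * s * e with ht
  have himt : imPart t = 1 := by
    have h3 := imPart_conjugate e s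
    rw [hesa] at h3
    rw [ht, h3, ← hn, ← hq,
      show e * (q * q) * e = (e * q) * (q * e) by simp [mul_assoc], heq, hqe, one_mul]
  have hstar_t : star t = t - (2 * Complex.I) • 1 := by
    have h3 : (2 * Complex.I) • imPart t = t - star t := by
      rw [show imPart t = ((2 * Complex.I)⁻¹ : ℂ) • (t - star t) from rfl, smul_smul,
        mul_inv_cancel₀ (by simp [Complex.ext_iff] : (2 * Complex.I : ℂ) ≠ 0), one_smul]
    rw [himt] at h3
    rw [h3]
    abel
  set h := t - Complex.I • 1 with hh
  have hhsa : IsSelfAdjoint h := by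
    rw [IsSelfAdjoint, hh, star_sub, hstar_t, star_smul, Complex.star_def, Complex.conj_I,
      star_one, neg_smul, sub_neg_eq_add]
    rw [show (2 : ℂ) * Complex.I = Complex.I + Complex.I by ring, add_smul]
    abel
  have hInot : (-Complex.I) ∉ spectrum ℂ h := by
    intro hmem
    have := hhsa.mem_spectrum_eq_re hmem
    simp [Complex.ext_iff] at this
  have htu : IsUnit t := by
    rw [spectrum.mem_iff, not_not] at hInot
    have : algebraMap ℂ A (-Complex.I) - h = -t := by
      rw [Algebra.algebraMap_eq_smul_one, hh, neg_smul]
      abel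
    rw [this, IsUnit.neg_iff _] at hInot
    exact hInot
  have : s = q * t * q := by
    rw [ht, ← mul_assoc, ← mul_assoc, hqe, one_mul, mul_assoc, heq, mul_one]
  rw [this]
  exact (hqu.mul htu).mul hqu

/-- real spectrum shift. -/
lemma mem_spectrum_shift {t : A} {r x : ℝ} (hx : x ∈ spectrum ℝ t) :
    r - x ∈ spectrum ℝ (algebraMap ℝ A r - t) := by
  rw [spectrum.mem_iff] at hx ⊢
  intro hu
  apply hx
  have : algebraMap ℝ A (r - x) - (algebraMap ℝ A r - t) = -(algebraMap ℝ A x - t) := by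
    rw [map_sub]; abel
  rw [this, IsUnit.neg_iff _] at hu
  exact hu

noncomputable def lowSpec (t : A) : ℝ := ‖t‖ - ‖algebraMap ℝ A ‖t‖ - t‖

lemma lowSpec_mem_spectrum [Nontrivial A] {t : A} (ht : IsSelfAdjoint t) :
    lowSpec t ∈ spectrum ℝ t := by
  set u := algebraMap ℝ A ‖t‖ - t with hu
  have hu0 : 0 ≤ u := sub_nonneg.mpr ht.le_algebraMap_norm_self
  have husa : ‖u‖ ∈ spectrum ℝ u := CStarAlgebra.norm_mem_spectrum_of_nonneg hu0
  rw [spectrum.mem_iff] at husa ⊢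
  intro hunit
  apply husa
  have heq2 : algebraMap ℝ A ‖u‖ - u = -(algebraMap ℝ A (lowSpec t) - t) := by
    rw [lowSpec, map_sub, hu]; abel
  rw [heq2]
  exact hunit.neg

lemma posUnit_iff_lowSpec_pos [Nontrivial A] {t : A} (ht : IsSelfAdjoint t) :
    (0 ≤ t ∧ IsUnit t) ↔ 0 < lowSpec t := by
  constructor
  · rintro ⟨h0, hu⟩
    have hmem := lowSpec_mem_spectrum ht
    have hnn := spectrum_nonneg_of_nonneg h0 hmem
    rcases hnn.lt_or_eq with h | h
    · exact h
    · exfalso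
      rw [← h] at hmem
      exact (spectrum.zero_mem_iff ℝ).mp hmem hu
  · intro hpos
    have hle : algebraMap ℝ A (lowSpec t) ≤ t := by
      rw [algebraMap_le_iff_le_spectrum (R := ℝ) ht]
      intro x hx
      have h1 : ‖t‖ - x ∈ spectrum ℝ (algebraMap ℝ A ‖t‖ - t) := mem_spectrum_shift hx
      have h2 := spectrum.norm_le_norm_of_mem h1
      rw [Real.norm_eq_abs] at h2
      have := le_abs_self (‖t‖ - x)
      rw [lowSpec]
      linarith
    exact posUnit_of_algebraMap_le hpos hle

lemma posUnit_sub_iff_norm_lt {h : A} (hh : 0 ≤ h) {r : ℝ} (hr : 0 < r) :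
    (0 ≤ algebraMap ℝ A r - h ∧ IsUnit (algebraMap ℝ A r - h)) ↔ ‖h‖ < r := by
  rcases subsingleton_or_nontrivial A with hs | hs
  · have : h = 0 := Subsingleton.elim _ _
    simp only [this, norm_zero, hr, iff_true]
    exact ⟨by rw [sub_zero]; exact algebraMap_real_nonneg hr.le, isUnit_of_subsingleton _⟩
  · constructor
    · rintro ⟨h0, hu⟩
      have hle : ‖h‖ ≤ r := by
        rw [CStarAlgebra.norm_le_iff_le_algebraMap h hr.le hh]
        rwa [sub_nonneg] at h0
      rcases hle.lt_or_eq with h1 | h1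
      · exact h1
      · exfalso
        have hmem : ‖h‖ ∈ spectrum ℝ h := CStarAlgebra.norm_mem_spectrum_of_nonneg hh
        have := mem_spectrum_shift (r := r) hmem
        rw [h1, sub_self] at this
        exact (spectrum.zero_mem_iff ℝ).mp this hu
    · intro hlt
      apply posUnit_of_algebraMap_le (show (0:ℝ) < r - ‖h‖ by linarith)
      rw [← sub_nonneg]
      have : algebraMap ℝ A r - h - algebraMap ℝ A (r - ‖h‖) = algebraMap ℝ A ‖h‖ - h := by
        rw [map_sub]; abel
      rw [this, sub_nonneg]
      exact hh.isSelfAdjoint.le_algebraMap_norm_self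

lemma posUnit_conjugate_iff {v : A} (hv : IsSelfAdjoint v) (hvu : IsUnit v) (x : A) :
    (0 ≤ v * x * v ∧ IsUnit (v * x * v)) ↔ (0 ≤ x ∧ IsUnit x) := by
  have key : ∀ w : A, IsSelfAdjoint w → IsUnit w → ∀ y : A, 0 ≤ y → IsUnit y →
      0 ≤ w * y * w ∧ IsUnit (w * y * w) := by
    intro w hw hwu y hy hyu
    refine ⟨by simpa [hw.star_eq] using star_left_conjugate_nonneg hy w, (hwu.mul hyu).mul hwu⟩
  constructor
  · rintro ⟨h0, hu⟩
    set e := Ring.inverse v with he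
    have hesa : IsSelfAdjoint e := by
      rw [IsSelfAdjoint, he, ← Ring.inverse_star, hv.star_eq]
    have heu : IsUnit e := by
      obtain ⟨u, rfl⟩ := hvu
      rw [he, Ring.inverse_unit]
      exact u⁻¹.isUnit
    have hx : x = e * (v * x * v) * e := by
      rw [← mul_assoc, ← mul_assoc, Ring.inverse_mul_cancel _ hvu, one_mul, mul_assoc,
        Ring.mul_inverse_cancel _ hvu, mul_one]
    rw [hx]
    exact key e hesa heu _ h0 hu
  · rintro ⟨h0, hu⟩
    exact key v hv hvu x h0 hu

end CStarHelpers2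
section Matrix2

variable {A : Type*} [CStarAlgebra A] [PartialOrder A] [StarOrderedRing A]

lemma isUnit_diag_two {p d : A} (hp : IsUnit p) :
    IsUnit (!![p, 0; 0, d] : Matrix (Fin 2) (Fin 2) A) ↔ IsUnit d := by
  constructor
  · rintro ⟨u, hu⟩
    have h1 := u.mul_inv
    have h2 := u.inv_mul
    set N : Matrix (Fin 2) (Fin 2) A := (u⁻¹ : (Matrix (Fin 2) (Fin 2) A)ˣ).val with hN
    rw [hu] at h1 h2
    have e1 : d * N 1 1 = 1 := by
      have := congrFun (congrFun h1 1) 1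
      simpa [Matrix.mul_apply, Fin.sum_univ_two] using this
    have e2 : N 1 1 * d = 1 := by
      have := congrFun (congrFun h2 1) 1
      simpa [Matrix.mul_apply, Fin.sum_univ_two] using this
    exact isUnit_iff_exists.mpr ⟨_, e1, e2⟩
  · intro hd
    refine isUnit_iff_exists.mpr ⟨!![Ring.inverse p, 0; 0, Ring.inverse d], ?_, ?_⟩
    · rw [Matrix.mul_fin_two]
      simp [Ring.mul_inverse_cancel _ hp, Ring.mul_inverse_cancel _ hd, Matrix.one_fin_two]
    · rw [Matrix.mul_fin_two]
      simp [Ring.inverse_mul_cancel _ hp, Ring.inverse_mul_cancel _ hd, Matrix.one_fin_two]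

lemma isUnit_lower_two (x : A) : IsUnit (!![1, 0; x, 1] : Matrix (Fin 2) (Fin 2) A) :=
  isUnit_iff_exists.mpr ⟨!![1, 0; -x, 1], by rw [Matrix.mul_fin_two]; simp [Matrix.one_fin_two],
    by rw [Matrix.mul_fin_two]; simp [Matrix.one_fin_two]⟩

lemma isUnit_upper_two (x : A) : IsUnit (!![1, x; 0, 1] : Matrix (Fin 2) (Fin 2) A) :=
  isUnit_iff_exists.mpr ⟨!![1, -x; 0, 1], by rw [Matrix.mul_fin_two]; simp [Matrix.one_fin_two],
    by rw [Matrix.mul_fin_two]; simp [Matrix.one_fin_two]⟩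

/-- Schur complement criterion for invertibility of a 2×2 block matrix. -/
lemma isUnit_two_two {p q r s : A} (hp : IsUnit p) :
    IsUnit (!![p, q; r, s] : Matrix (Fin 2) (Fin 2) A) ↔
      IsUnit (s - r * Ring.inverse p * q) := by
  have h1 : p * Ring.inverse p = 1 := Ring.mul_inverse_cancel _ hp
  have h2 : Ring.inverse p * p = 1 := Ring.inverse_mul_cancel _ hp
  have key : (!![p, q; r, s] : Matrix (Fin 2) (Fin 2) A) =
      !![1, 0; r * Ring.inverse p, 1] * (!![p, 0; 0, s - r * Ring.inverse p * q] *
        !![1, Ring.inverse p * q; 0, 1]) := by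
    rw [Matrix.mul_fin_two, Matrix.mul_fin_two]
    have e11 : p * (Ring.inverse p * q) = q := by rw [← mul_assoc, h1, one_mul]
    have e21 : r * Ring.inverse p * p = r := by rw [mul_assoc, h2, mul_one]
    have e22 : r * Ring.inverse p * (p * (Ring.inverse p * q)) +
        (s - r * Ring.inverse p * q) = s := by rw [e11]; abel
    have e23 : r * Ring.inverse p * q + (s - r * Ring.inverse p * q) = s := by abel
    simp only [one_mul, mul_one, zero_mul, mul_zero, add_zero, zero_add, e11, e21, e22, e23]
  rw [key]
  have hL := Units.isUnit_units_mul ((isUnit_lower_two (r * Ring.inverse p)).unit) 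
    (!![p, 0; 0, s - r * Ring.inverse p * q] * !![1, Ring.inverse p * q; 0, 1])
  rw [IsUnit.unit_spec] at hL
  rw [hL]
  have hU := Units.isUnit_mul_units (!![p, 0; 0, s - r * Ring.inverse p * q])
    ((isUnit_upper_two (Ring.inverse p * q)).unit)
  rw [IsUnit.unit_spec] at hU
  rw [hU]
  exact isUnit_diag_two hp

end Matrix2
section TTsec

variable {A : Type*} [CStarAlgebra A] [PartialOrder A] [StarOrderedRing A]

noncomputable def TT (α β γ : A) (z : ℂ) : A :=
  (γ - algebraMap ℂ A z) - star β * Ring.inverse (α - algebraMap ℂ A z) * β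

lemma TT_zero (α β γ : A) : TT α β γ 0 = γ - star β * Ring.inverse α * β := by
  simp [TT]

lemma isUnit_alpha_sub {α : A} (hα : 0 ≤ α) (hαu : IsUnit α) {z : ℂ}
    (hz : z.im ≠ 0 ∨ z.re ≤ 0) : IsUnit (α - algebraMap ℂ A z) := by
  by_cases him : z.im = 0
  · replace hz : z.re ≤ 0 := hz.resolve_left (by simpa using him)
    have hzre : z = (z.re : ℂ) := Complex.ext rfl (by simpa using him)
    rcases hz.lt_or_eq with hlt | heq
    · refine (posUnit_of_algebraMap_le (δ := -z.re) (by linarith) ?_).2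
      rw [← sub_nonneg]
      have h5 : algebraMap ℂ A z = algebraMap ℝ A z.re := by
        rw [IsScalarTower.algebraMap_apply ℝ ℂ A z.re]
        exact congrArg _ hzre
      have h4 : α - algebraMap ℂ A z - algebraMap ℝ A (-z.re) = α := by
        rw [h5, map_neg]; abel
      rw [h4]; exact hα
    · rw [hzre, heq]
      simpa using hαu
  · have hsa : IsSelfAdjoint α := .of_nonneg hα
    have hmem : z ∉ spectrum ℂ α := fun hmem => him (by
      rw [hsa.mem_spectrum_eq_re hmem]; simp)
    rw [spectrum.mem_iff, not_not] at hmem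
    have h2 : α - algebraMap ℂ A z = -(algebraMap ℂ A z - α) := by abel
    rw [h2]; exact hmem.neg

lemma star_algebraMap_real (x : ℝ) :
    star (algebraMap ℂ A (x : ℂ)) = algebraMap ℂ A (x : ℂ) := by
  rw [← algebraMap_star_comm, Complex.star_def, Complex.conj_ofReal]

lemma TT_real_isSelfAdjoint {α β γ : A} (hα : IsSelfAdjoint α) (hγ : IsSelfAdjoint γ) (x : ℝ) :
    IsSelfAdjoint (TT α β γ (x : ℂ)) := by
  have h2 : star (α - algebraMap ℂ A (x : ℂ)) = α - algebraMap ℂ A (x : ℂ) := by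
    rw [star_sub, hα.star_eq, star_algebraMap_real]
  rw [IsSelfAdjoint, TT, star_sub, star_sub, hγ.star_eq, star_algebraMap_real, star_mul,
    star_mul, star_star, ← Ring.inverse_star, h2, mul_assoc]

lemma imPart_TT {α β γ : A} (hα : IsSelfAdjoint α) (hγ : IsSelfAdjoint γ) {z : ℂ}
    (hz : IsUnit (α - algebraMap ℂ A z)) :
    imPart (TT α β γ z) = ((-z.im : ℝ) : ℂ) •
      (1 + star (star (Ring.inverse (α - algebraMap ℂ A z)) * β) *
        (star (Ring.inverse (α - algebraMap ℂ A z)) * β)) := by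
  set u := α - algebraMap ℂ A z with hu
  set R := Ring.inverse u with hR
  have huR : u * R = 1 := Ring.mul_inverse_cancel _ hz
  have hRu : R * u = 1 := Ring.inverse_mul_cancel _ hz
  have hsR : star u * star R = 1 := by rw [← star_mul, hRu, star_one]
  have hRs : star R * star u = 1 := by rw [← star_mul, huR, star_one]
  have hRsub : R - star R = R * (star u - u) * star R := by
    rw [mul_sub, sub_mul, mul_assoc R (star u) (star R), hsR, mul_one, hRu, one_mul]
  have hstaru : star u - u = algebraMap ℂ A ((2 * z.im : ℝ) * Complex.I) := by
    rw [hu, star_sub, hα.star_eq, ← algebraMap_star_comm]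
    rw [show α - algebraMap ℂ A (star z) - (α - algebraMap ℂ A z)
        = algebraMap ℂ A z - algebraMap ℂ A (star z) by abel, ← map_sub]
    congr 1
    rw [Complex.star_def, Complex.sub_conj]
  have him : imPart R = (z.im : ℂ) • (R * star R) := by
    rw [show imPart R = ((2 * Complex.I)⁻¹ : ℂ) • (R - star R) from rfl, hRsub, hstaru,
      Algebra.algebraMap_eq_smul_one, mul_smul_comm, mul_one, smul_mul_assoc, smul_smul]
    congr 1
    push_cast
    field_simp [Complex.I_ne_zero]
  have hTT : TT α β γ z = (γ - algebraMap ℂ A z) - star β * R * β := rfl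
  have hassoc : star β * ((z.im : ℂ) • (R * star R)) * β
      = (z.im : ℂ) • (star (star R * β) * (star R * β)) := by
    rw [star_mul, star_star, mul_smul_comm, smul_mul_assoc]
    congr 1
    simp [mul_assoc]
  rw [hTT, imPart_sub, imPart_sub, imPart_of_isSelfAdjoint hγ, imPart_algebraMap,
    imPart_conjugate β R, him, hassoc]
  push_cast
  rw [neg_smul, smul_add]
  abel

end TTsec
section Main

variable {A : Type*} [CStarAlgebra A] [PartialOrder A] [StarOrderedRing A]

lemma mem_spectrum_M_iff {α β γ : A} {z : ℂ} (hz : IsUnit (α - algebraMap ℂ A z)) :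
    z ∈ spectrum ℂ (!![α, β; star β, γ] : Matrix (Fin 2) (Fin 2) A) ↔
      ¬ IsUnit (TT α β γ z) := by
  rw [spectrum.mem_iff]
  have key : algebraMap ℂ (Matrix (Fin 2) (Fin 2) A) z - !![α, β; star β, γ]
      = -(!![α - algebraMap ℂ A z, β; star β, γ - algebraMap ℂ A z]) := by
    ext i j
    fin_cases i <;> fin_cases j <;>
      simp [Matrix.algebraMap_matrix_apply]
  rw [key, IsUnit.neg_iff, isUnit_two_two hz]
  exact Iff.rfl

lemma M_isSelfAdjoint {α β γ : A} (hα : IsSelfAdjoint α) (hγ : IsSelfAdjoint γ) :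
    IsSelfAdjoint (!![α, β; star β, γ] : Matrix (Fin 2) (Fin 2) A) := by
  rw [IsSelfAdjoint, Matrix.star_eq_conjTranspose]
  ext i j
  fin_cases i <;> fin_cases j <;>
    simp [Matrix.conjTranspose_apply, hα.star_eq, hγ.star_eq]

lemma cstar_zero_le_one : (0 : A) ≤ 1 := by simpa using star_mul_self_nonneg (1 : A)

theorem P_iff_Q [Nontrivial A] {α β γ : A} (hα : 0 ≤ α) (hαu : IsUnit α)
    (hγ : IsSelfAdjoint γ) :
    IsPosInvertibleSpec (!![α, β; star β, γ] : Matrix (Fin 2) (Fin 2) A) ↔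
      (0 ≤ γ - star β * Ring.inverse α * β ∧ IsUnit (γ - star β * Ring.inverse α * β)) := by
  have hαsa : IsSelfAdjoint α := .of_nonneg hα
  set S := γ - star β * Ring.inverse α * β with hS
  constructor
  · rintro ⟨hMsa, hspec⟩
    have hf_unit : ∀ x : ℝ, x ≤ 0 → IsUnit (TT α β γ (x : ℂ)) := by
      intro x hx
      have hz : IsUnit (α - algebraMap ℂ A ((x : ℝ) : ℂ)) :=
        isUnit_alpha_sub hα hαu (Or.inr (by simpa using hx))
      by_contra hnu
      have hmem := (mem_spectrum_M_iff hz).mpr hnu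
      have h2 := (hspec _ hmem).2
      simp only [Complex.ofReal_re] at h2
      linarith
    -- the scalar function
    set x0 : ℝ := -(1 + ‖γ‖ + ‖β‖ * ‖β‖) with hx0
    clear_value x0
    have hx0neg : x0 ≤ 0 := by rw [hx0]; nlinarith [norm_nonneg γ, norm_nonneg β]
    have hux0 : IsUnit (α - algebraMap ℂ A ((x0 : ℝ) : ℂ)) :=
      isUnit_alpha_sub hα hαu (Or.inr (by simpa using hx0neg))
    set R0 := Ring.inverse (α - algebraMap ℂ A ((x0 : ℝ) : ℂ)) with hR0
    clear_value R0
    have halg : algebraMap ℂ A ((x0 : ℝ) : ℂ) = algebraMap ℝ A x0 :=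
      (IsScalarTower.algebraMap_apply ℝ ℂ A x0).symm
    have hOne_le : (1 : A) ≤ α - algebraMap ℂ A ((x0 : ℝ) : ℂ) := by
      rw [halg, ← sub_nonneg]
      have h6 : α - algebraMap ℝ A x0 - 1 = α + algebraMap ℝ A (-x0 - 1) := by
        rw [map_sub, map_neg, map_one]; abel
      have h7 : (0 : ℝ) ≤ -x0 - 1 := by
        rw [hx0]; nlinarith [norm_nonneg γ, (mul_self_nonneg ‖β‖), norm_nonneg β]
      rw [h6]
      exact add_nonneg hα (algebraMap_real_nonneg h7)
    have hUnn : (0 : A) ≤ (hux0.unit : A) := by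
      rw [IsUnit.unit_spec]; exact le_trans cstar_zero_le_one hOne_le
    have e1 : R0 = ((hux0.unit⁻¹ : Aˣ) : A) := by
      rw [hR0]
      exact (congrArg Ring.inverse hux0.unit_spec.symm).trans (Ring.inverse_unit hux0.unit)
    have hR0nn : 0 ≤ R0 := by rw [e1]; exact CFC.inv_nonneg_of_nonneg hux0.unit hUnn
    have hR0le1 : R0 ≤ 1 := by
      rw [e1]
      apply CStarAlgebra.inv_le_one
      rw [← Units.val_le_val, Units.val_one, IsUnit.unit_spec]
      exact hOne_le
    have hR0norm : ‖R0‖ ≤ 1 := (CStarAlgebra.norm_le_one_iff_of_nonneg R0 hR0nn).mpr hR0le1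
    set W := star β * R0 * β with hW
    have hR0sa : IsSelfAdjoint R0 := by
      rw [IsSelfAdjoint, hR0, ← Ring.inverse_star, star_sub, hαsa.star_eq, star_algebraMap_real]
    have hWsa : IsSelfAdjoint W := by
      rw [IsSelfAdjoint, hW, star_mul, star_mul, star_star, hR0sa.star_eq, mul_assoc]
    have hWnorm : ‖W‖ ≤ ‖β‖ * ‖β‖ := by
      calc ‖star β * R0 * β‖ ≤ ‖star β * R0‖ * ‖β‖ := norm_mul_le _ _
        _ ≤ ‖star β‖ * ‖R0‖ * ‖β‖ :=
            mul_le_mul_of_nonneg_right (norm_mul_le _ _) (norm_nonneg _)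
        _ ≤ ‖β‖ * 1 * ‖β‖ := by
            rw [norm_star]
            exact mul_le_mul_of_nonneg_right
              (mul_le_mul_of_nonneg_left hR0norm (norm_nonneg _)) (norm_nonneg _)
        _ = ‖β‖ * ‖β‖ := by ring
    have hTTx0 : TT α β γ ((x0 : ℝ) : ℂ) = γ + algebraMap ℝ A (-x0) - W := by
      rw [TT, ← hR0, ← hW, map_neg, ← halg]
      abel
    have key1 : algebraMap ℝ A 1 ≤ TT α β γ ((x0 : ℝ) : ℂ) := by
      rw [hTTx0]
      have l1 : -(algebraMap ℝ A ‖γ‖) ≤ γ := hγ.neg_algebraMap_norm_le_self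
      have l2 : -(algebraMap ℝ A (‖β‖ * ‖β‖)) ≤ -W :=
        neg_le_neg (hWsa.le_algebraMap_norm_self.trans (algebraMap_real_mono hWnorm))
      calc algebraMap ℝ A 1
          = -(algebraMap ℝ A ‖γ‖) + algebraMap ℝ A (-x0) + -(algebraMap ℝ A (‖β‖ * ‖β‖)) := by
            rw [← map_neg, ← map_neg, ← map_add, ← map_add]
            congr 1
            rw [hx0]; ring
        _ ≤ γ + algebraMap ℝ A (-x0) + -W := add_le_add (add_le_add l1 le_rfl) l2
        _ = γ + algebraMap ℝ A (-x0) - W := by abel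
    obtain ⟨hfx0nn, hfx0u⟩ := posUnit_of_algebraMap_le one_pos key1
    -- continuity
    set f : ℝ → A := fun x => TT α β γ ((x : ℝ) : ℂ) with hf
    have hcont : ContinuousOn f (Set.Icc x0 0) := by
      intro x hx
      have hzu : IsUnit (α - algebraMap ℂ A ((x : ℝ) : ℂ)) :=
        isUnit_alpha_sub hα hαu (Or.inr (by simpa using hx.2))
      have hg0 : ContinuousAt (fun y : ℝ => α - algebraMap ℂ A ((y : ℝ) : ℂ)) x :=
        continuousAt_const.sub ((continuous_algebraMap ℂ A).continuousAt.comp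
          Complex.continuous_ofReal.continuousAt)
      have hinv : ContinuousAt (fun y : ℝ => Ring.inverse (α - algebraMap ℂ A ((y : ℝ) : ℂ))) x := by
        have h1 := NormedRing.inverse_continuousAt hzu.unit
        rw [IsUnit.unit_spec] at h1
        exact ContinuousAt.comp (f := fun y : ℝ => α - algebraMap ℂ A ((y : ℝ) : ℂ)) h1 hg0
      apply ContinuousAt.continuousWithinAt
      exact (continuousAt_const.sub ((continuous_algebraMap ℂ A).continuousAt.comp
        Complex.continuous_ofReal.continuousAt)).sub
        ((continuousAt_const.mul hinv).mul continuousAt_const)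
    have hlow : Continuous (fun t : A => lowSpec t) := by
      unfold lowSpec
      fun_prop
    set g : ℝ → ℝ := fun x => lowSpec (f x) with hgdef
    have hgc : ContinuousOn g (Set.Icc x0 0) := hlow.comp_continuousOn hcont
    have hgne : ∀ x ∈ Set.Icc x0 0, g x ≠ 0 := by
      intro x hx h0
      have hmem := lowSpec_mem_spectrum (t := f x) (TT_real_isSelfAdjoint hαsa hγ x)
      rw [show lowSpec (f x) = g x from rfl, h0] at hmem
      exact (spectrum.zero_mem_iff ℝ).mp hmem (hf_unit x hx.2)
    have hgx0 : 0 < g x0 :=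
      (posUnit_iff_lowSpec_pos (TT_real_isSelfAdjoint hαsa hγ x0)).mp ⟨hfx0nn, hfx0u⟩
    have hg0 : 0 < g 0 := by
      by_contra hle
      push_neg at hle
      obtain ⟨x, hx, hgx⟩ := intermediate_value_Icc' hx0neg hgc ⟨hle, hgx0.le⟩
      exact hgne x hx hgx
    have hfin := (posUnit_iff_lowSpec_pos (TT_real_isSelfAdjoint hαsa hγ 0)).mpr hg0
    rwa [show TT α β γ ((0 : ℝ) : ℂ) = S by push_cast; rw [TT_zero]] at hfin
  · rintro ⟨hSnn, hSu⟩
    refine ⟨M_isSelfAdjoint hαsa hγ, ?_⟩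
    intro z hzmem
    by_contra hcon
    push_neg at hcon
    have hbad : z.im ≠ 0 ∨ z.re ≤ 0 := by
      by_cases h : z.im = 0
      · exact Or.inr (hcon h)
      · exact Or.inl h
    have hz : IsUnit (α - algebraMap ℂ A z) := isUnit_alpha_sub hα hαu hbad
    rw [mem_spectrum_M_iff hz] at hzmem
    apply hzmem
    by_cases him : z.im = 0
    · have hre : z.re ≤ 0 := hbad.resolve_left (not_not_intro him)
      have hzre : z = ((z.re : ℝ) : ℂ) := Complex.ext rfl (by simpa using him)
      rcases hre.lt_or_eq with hlt | heq0
      · apply (posUnit_of_algebraMap_le (δ := -z.re) (by linarith) ?_).2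
        set R := Ring.inverse (α - algebraMap ℂ A z) with hRdef
        clear_value R
        have hzrealg : algebraMap ℂ A z = algebraMap ℝ A z.re := by
          rw [IsScalarTower.algebraMap_apply ℝ ℂ A z.re]
          exact congrArg _ hzre
        have hle : α ≤ α - algebraMap ℂ A z := by
          rw [hzrealg, ← sub_nonneg,
            show α - algebraMap ℝ A z.re - α = algebraMap ℝ A (-z.re) by rw [map_neg]; abel]
          exact algebraMap_real_nonneg (by linarith)
        have eα : Ring.inverse α = ((hαu.unit⁻¹ : Aˣ) : A) :=
          (congrArg Ring.inverse hαu.unit_spec.symm).trans (Ring.inverse_unit hαu.unit)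
        have eR : R = ((hz.unit⁻¹ : Aˣ) : A) := by
          rw [hRdef]
          exact (congrArg Ring.inverse hz.unit_spec.symm).trans (Ring.inverse_unit hz.unit)
        have hdle : R ≤ Ring.inverse α := by
          rw [eα, eR]
          refine CStarAlgebra.inv_le_inv ?_ ?_
          · rw [IsUnit.unit_spec]; exact hα
          · rw [IsUnit.unit_spec, IsUnit.unit_spec]; exact hle
        have hdnn : 0 ≤ star β * (Ring.inverse α - R) * β :=
          star_left_conjugate_nonneg (sub_nonneg.mpr hdle) β
        have hkey : TT α β γ z - algebraMap ℝ A (-z.re)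
            = S + star β * (Ring.inverse α - R) * β := by
          rw [TT, ← hRdef, hS, hzrealg, map_neg, mul_sub, sub_mul]
          abel
        rw [← sub_nonneg, hkey]
        exact add_nonneg hSnn hdnn
      · have hz0 : z = 0 := by rw [hzre, heq0]; norm_num
        rw [hz0, TT_zero]
        exact hSu
    · set w := star (Ring.inverse (α - algebraMap ℂ A z)) * β with hw
      have him2 := imPart_TT (β := β) (γ := γ) hαsa hγ hz
      rw [← hw] at him2
      have h1p : 0 ≤ 1 + star w * w := add_nonneg cstar_zero_le_one (star_mul_self_nonneg w)
      have h1pu : IsUnit (1 + star w * w) :=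
        CStarAlgebra.isUnit_of_le _
          (le_add_of_nonneg_right (star_mul_self_nonneg w)) (isUnit_one.isStrictlyPositive cstar_zero_le_one)
      rcases lt_or_gt_of_ne him with hneg | hpos
      · apply isUnit_of_imPart_posUnit
        · rw [him2]; exact complex_smul_nonneg (by linarith) h1p
        · rw [him2]
          refine (isUnit_complex_smul_iff ?_).mpr h1pu
          norm_cast
          linarith
      · rw [← isUnit_star]
        have him3 : imPart (star (TT α β γ z)) = ((z.im : ℝ) : ℂ) • (1 + star w * w) := by
          rw [imPart_star, him2, ← neg_smul]
          norm_cast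
          rw [neg_neg]
        apply isUnit_of_imPart_posUnit
        · rw [him3]; exact complex_smul_nonneg hpos.le h1p
        · rw [him3]
          refine (isUnit_complex_smul_iff ?_).mpr h1pu
          exact_mod_cast him

end Main
section Final

variable {A : Type*} [CStarAlgebra A] [PartialOrder A] [StarOrderedRing A]

lemma coe_real_smul (r : ℝ) (x : A) : ((r : ℝ) : ℂ) • x = r • x := by
  rw [← algebraMap_smul ℂ (r : ℝ) x]
  norm_cast

lemma imPart_block (a b c : A) :
    imPart (!![a, b; 0, c] : Matrix (Fin 2) (Fin 2) A) =
      !![imPart a, ((2 * Complex.I)⁻¹ : ℂ) • b;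
         star (((2 * Complex.I)⁻¹ : ℂ) • b), imPart c] := by
  have hstar : star (((2 * Complex.I)⁻¹ : ℂ) • b) = -(((2 * Complex.I)⁻¹ : ℂ) • star b) := by
    rw [star_smul, Complex.star_def, star_twoI_inv, neg_smul]
  ext i j
  fin_cases i <;> fin_cases j <;>
    simp [imPart, Matrix.star_eq_conjTranspose, Matrix.conjTranspose_apply, hstar, smul_sub]

lemma scal_quarter : (-(2 * Complex.I)⁻¹) * ((2 * Complex.I)⁻¹) = (4⁻¹ : ℂ) := by
  rw [neg_mul, ← mul_inv]
  have : (2 * Complex.I) * (2 * Complex.I) = -4 := by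
    have := Complex.I_mul_I
    ring_nf
    rw [Complex.I_sq]
    ring
  rw [this]
  norm_num

lemma S'_eq (α γ b : A) :
    4 • γ - star b * Ring.inverse α * b
      = (4 : ℝ) • (γ - star (((2 * Complex.I)⁻¹ : ℂ) • b) * Ring.inverse α *
          (((2 * Complex.I)⁻¹ : ℂ) • b)) := by
  have h1 : star (((2 * Complex.I)⁻¹ : ℂ) • b) * Ring.inverse α * (((2 * Complex.I)⁻¹ : ℂ) • b)
      = ((4 : ℂ))⁻¹ • (star b * Ring.inverse α * b) := by
    rw [star_smul, Complex.star_def, star_twoI_inv, smul_mul_assoc, smul_mul_assoc,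
      mul_smul_comm, smul_smul, scal_quarter]
  have h2 : (4 : ℝ) • ((4⁻¹ : ℂ) • (star b * Ring.inverse α * b))
      = star b * Ring.inverse α * b := by
    rw [← coe_real_smul 4, smul_smul]
    norm_num
  have h3 : (4 : ℝ) • γ = 4 • γ := by
    rw [← Nat.cast_smul_eq_nsmul ℝ 4 γ]
    norm_num
  rw [h1, smul_sub, h2, h3]

lemma posUnit_real_smul_iff {r : ℝ} (hr : 0 < r) {x : A} :
    (0 ≤ r • x ∧ IsUnit (r • x)) ↔ (0 ≤ x ∧ IsUnit x) := by
  have h1 : ∀ s : ℝ, 0 < s → ∀ y : A, 0 ≤ y → IsUnit y → 0 ≤ s • y ∧ IsUnit (s • y) := by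
    intro s hs y hy hyu
    refine ⟨real_smul_nonneg hs.le hy, ?_⟩
    rw [← coe_real_smul]
    exact (isUnit_complex_smul_iff (by exact_mod_cast hs.ne')).mpr hyu
  constructor
  · rintro ⟨h0, hu⟩
    have h2 := h1 r⁻¹ (by positivity) _ h0 hu
    rwa [smul_smul, inv_mul_cancel₀ hr.ne', one_smul] at h2
  · rintro ⟨h0, hu⟩
    exact h1 r hr x h0 hu

lemma Q2_iff_norm {α γ : A} (b : A) (hα : 0 ≤ α) (hαu : IsUnit α) (hγ : 0 ≤ γ)
    (hγu : IsUnit γ) :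
    (0 ≤ 4 • γ - star b * Ring.inverse α * b ∧
        IsUnit (4 • γ - star b * Ring.inverse α * b)) ↔
      ‖Ring.inverse (CFC.sqrt α) * b * Ring.inverse (CFC.sqrt γ)‖ < 2 := by
  have hsα : CFC.sqrt α * CFC.sqrt α = α := CFC.sqrt_mul_sqrt_self α hα
  have hsγ : CFC.sqrt γ * CFC.sqrt γ = γ := CFC.sqrt_mul_sqrt_self γ hγ
  set sα := CFC.sqrt α with hsαdef
  set sγ := CFC.sqrt γ with hsγdef
  have hsαu : IsUnit sα := isUnit_of_sq hsα hαu
  have hsγu : IsUnit sγ := isUnit_of_sq hsγ hγu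
  set eα := Ring.inverse sα with heαdef
  set eγ := Ring.inverse sγ with heγdef
  have hsαsa : IsSelfAdjoint sα := .of_nonneg (CFC.sqrt_nonneg α)
  have hsγsa : IsSelfAdjoint sγ := .of_nonneg (CFC.sqrt_nonneg γ)
  have heαsa : IsSelfAdjoint eα := by
    rw [IsSelfAdjoint, heαdef, ← Ring.inverse_star, hsαsa.star_eq]
  have heγsa : IsSelfAdjoint eγ := by
    rw [IsSelfAdjoint, heγdef, ← Ring.inverse_star, hsγsa.star_eq]
  set k := eα * b * eγ with hk
  have hstark : star k = eγ * star b * eα := by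
    rw [hk, star_mul, star_mul, heαsa.star_eq, heγsa.star_eq, mul_assoc]
  have hinvα : eα * eα = Ring.inverse α := by
    rw [heαdef, inverse_mul_self hsαu, hsα]
  have hkk : star k * k = eγ * (star b * Ring.inverse α * b) * eγ := by
    rw [hstark, hk, show (eγ * star b * eα) * (eα * b * eγ)
      = eγ * (star b * (eα * eα) * b) * eγ from by simp only [mul_assoc], hinvα]
  have hcan1 : sγ * eγ = 1 := Ring.mul_inverse_cancel _ hsγu
  have hcan2 : eγ * sγ = 1 := Ring.inverse_mul_cancel _ hsγu
  have hfact : 4 • γ - star b * Ring.inverse α * b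
      = sγ * (algebraMap ℝ A 4 - star k * k) * sγ := by
    rw [mul_sub, sub_mul, hkk]
    rw [show sγ * (eγ * (star b * Ring.inverse α * b) * eγ) * sγ
      = (sγ * eγ) * (star b * Ring.inverse α * b) * (eγ * sγ) from by simp only [mul_assoc],
      hcan1, hcan2, one_mul, mul_one]
    rw [Algebra.algebraMap_eq_smul_one, mul_smul_comm, mul_one, smul_mul_assoc, hsγ,
      ← Nat.cast_smul_eq_nsmul ℝ 4 γ]
    norm_num
  rw [hfact, posUnit_conjugate_iff hsγsa hsγu,
    posUnit_sub_iff_norm_lt (star_mul_self_nonneg k) (by norm_num : (0:ℝ) < 4),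
    CStarRing.norm_star_mul_self]
  constructor
  · intro h; nlinarith [norm_nonneg k]
  · intro h; nlinarith [norm_nonneg k]

end Final

/-- Let `A` be a unital C*-algebra and `a, c, b ∈ A` with `Im a > 0`, `Im c > 0`.  The block
matrix `[[a, b], [0, c]]` has positive invertible imaginary part in `M₂(A)` if and only if
`‖(Im a)^{-1/2} b (Im c)^{-1/2}‖ < 2`, equivalently `b* (Im a)⁻¹ b < 4 Im c`. -/
theorem stmt_3 {A : Type*} [CStarAlgebra A] [PartialOrder A] [StarOrderedRing A]
    (a b c : A) (ha : 0 ≤ imPart a ∧ IsUnit (imPart a))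
    (hc : 0 ≤ imPart c ∧ IsUnit (imPart c)) :
    (IsPosInvertibleSpec (imPart (!![a, b; 0, c] : Matrix (Fin 2) (Fin 2) A)) ↔
      ‖Ring.inverse (CFC.sqrt (imPart a)) * b * Ring.inverse (CFC.sqrt (imPart c))‖ < 2) ∧
    (IsPosInvertibleSpec (imPart (!![a, b; 0, c] : Matrix (Fin 2) (Fin 2) A)) ↔
      (0 ≤ 4 • imPart c - star b * Ring.inverse (imPart a) * b ∧
        IsUnit (4 • imPart c - star b * Ring.inverse (imPart a) * b))) := by
  obtain hsub | hnt := subsingleton_or_nontrivial A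
  · have hP : IsPosInvertibleSpec (imPart (!![a, b; 0, c] : Matrix (Fin 2) (Fin 2) A)) := by
      refine ⟨?_, fun z hz => ?_⟩
      · have : Subsingleton (Matrix (Fin 2) (Fin 2) A) :=
          ⟨fun M N => by ext i j; exact Subsingleton.elim _ _⟩
        exact Subsingleton.elim _ _
      · exfalso
        rw [spectrum.mem_iff] at hz
        have : Subsingleton (Matrix (Fin 2) (Fin 2) A) :=
          ⟨fun M N => by ext i j; exact Subsingleton.elim _ _⟩
        exact hz (isUnit_of_subsingleton _)
    constructor
    · refine iff_of_true hP ?_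
      rw [show Ring.inverse (CFC.sqrt (imPart a)) * b * Ring.inverse (CFC.sqrt (imPart c))
        = 0 from Subsingleton.elim _ _, norm_zero]
      norm_num
    · exact iff_of_true hP ⟨le_of_eq (Subsingleton.elim _ _), isUnit_of_subsingleton _⟩
  · obtain ⟨hα0, hαu⟩ := ha
    obtain ⟨hγ0, hγu⟩ := hc
    have hγsa : IsSelfAdjoint (imPart c) := imPart_isSelfAdjoint c
    have hMeq := imPart_block a b c
    have hPQ := P_iff_Q (β := ((2 * Complex.I)⁻¹ : ℂ) • b) hα0 hαu hγsa
    rw [hMeq]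
    have hS' := S'_eq (imPart a) (imPart c) b
    have hbridge : (0 ≤ imPart c - star (((2 * Complex.I)⁻¹ : ℂ) • b) *
          Ring.inverse (imPart a) * (((2 * Complex.I)⁻¹ : ℂ) • b) ∧
        IsUnit (imPart c - star (((2 * Complex.I)⁻¹ : ℂ) • b) *
          Ring.inverse (imPart a) * (((2 * Complex.I)⁻¹ : ℂ) • b))) ↔
        (0 ≤ 4 • imPart c - star b * Ring.inverse (imPart a) * b ∧
          IsUnit (4 • imPart c - star b * Ring.inverse (imPart a) * b)) := by
      rw [hS']
      exact (posUnit_real_smul_iff (by norm_num)).symm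
    refine ⟨(hPQ.trans hbridge).trans (Q2_iff_norm b hα0 hαu hγ0 hγu), hPQ.trans hbridge⟩
end

section
/- Let A be a von Neumann algebra, n ∈ ℕ, r > 0, and c ∈ Mₙ(A) with Im c > 0. Define B⁺ₙ(c,r) = {a ∈ Mₙ(A) : Im a > 0 and ‖(Im a)^{-1/2}(a−c)(Im c)^{-1/2}‖ ≤ r}. Then for every a ∈ B⁺ₙ(c,r), ‖a − c‖² ≤ r² ‖Im a‖ ‖Im c‖. -/
/-- The real part `Re x = (x + x*)/2` of an element of a complex star algebra. -/
noncomputable def rePart {B : Type*} [Ring B] [StarRing B] [Algebra ℂ B] (x : B) : B :=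
  ((2 : ℂ)⁻¹) • (x + star x)

/-- The noncommutative hyperbolic ball `B⁺ₙ(c, r)`: here the C*-algebra `A` plays the role of
`Mₙ(𝒜)` for a von Neumann algebra `𝒜`.  It consists of those `a` with `Im a` positive and
invertible such that `‖(Im a)^{-1/2} (a − c) (Im c)^{-1/2}‖ ≤ r`. -/
noncomputable def ncUpperBall {A : Type*} [CStarAlgebra A] [PartialOrder A]
    [StarOrderedRing A] (c : A) (r : ℝ) : Set A :=
  {a | (0 ≤ imPart a ∧ IsUnit (imPart a)) ∧
    ‖Ring.inverse (CFC.sqrt (imPart a)) * (a - c) * Ring.inverse (CFC.sqrt (imPart c))‖ ≤ r}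

lemma isUnit_of_sq_s6 {R : Type*} [Monoid R] {x : R} (h : IsUnit (x * x)) : IsUnit x := by
  obtain ⟨u, hu⟩ := h
  have hb : x * (x * ↑u⁻¹) = 1 := by rw [← mul_assoc, ← hu, Units.mul_inv]
  have ha : (↑u⁻¹ * x) * x = 1 := by rw [mul_assoc, ← hu, Units.inv_mul]
  have hab : (↑u⁻¹ * x : R) = x * ↑u⁻¹ := by
    calc (↑u⁻¹ * x : R) = (↑u⁻¹ * x) * (x * (x * ↑u⁻¹)) := by rw [hb, mul_one]
    _ = ((↑u⁻¹ * x) * x) * (x * ↑u⁻¹) := by simp [mul_assoc]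
    _ = x * ↑u⁻¹ := by rw [ha, one_mul]
  exact ⟨⟨x, x * ↑u⁻¹, hb, by rw [← hab, mul_assoc, ← hu, Units.inv_mul]⟩, rfl⟩

/-- For every `a ∈ B⁺ₙ(c,r)`, `‖a − c‖² ≤ r² ‖Im a‖ ‖Im c‖`. -/
theorem stmt_6 {A : Type*} [CStarAlgebra A] [PartialOrder A] [StarOrderedRing A]
    (c : A) (r : ℝ) (hr : 0 < r) (hc : 0 ≤ imPart c ∧ IsUnit (imPart c))
    (a : A) (ha : a ∈ ncUpperBall c r) :
    ‖a - c‖ ^ 2 ≤ r ^ 2 * ‖imPart a‖ * ‖imPart c‖ := by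
  obtain ⟨⟨ha0, haU⟩, hnorm⟩ := ha
  obtain ⟨hc0, hcU⟩ := hc
  set s := CFC.sqrt (imPart a) with hs
  set t := CFC.sqrt (imPart c) with ht
  have hss : s * s = imPart a := CFC.sqrt_mul_sqrt_self _ ha0
  have htt : t * t = imPart c := CFC.sqrt_mul_sqrt_self _ hc0
  have hsU : IsUnit s := isUnit_of_sq_s6 (hss ▸ haU)
  have htU : IsUnit t := isUnit_of_sq_s6 (htt ▸ hcU)
  have key : a - c = s * (Ring.inverse s * (a - c) * Ring.inverse t) * t := by
    rw [mul_assoc, mul_assoc, Ring.inverse_mul_cancel _ htU, mul_one,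
      ← mul_assoc, Ring.mul_inverse_cancel _ hsU, one_mul]
  have hbound : ‖a - c‖ ≤ ‖s‖ * r * ‖t‖ := by
    calc ‖a - c‖ = ‖s * (Ring.inverse s * (a - c) * Ring.inverse t) * t‖ := by rw [← key]
    _ ≤ ‖s * (Ring.inverse s * (a - c) * Ring.inverse t)‖ * ‖t‖ := norm_mul_le _ _
    _ ≤ ‖s‖ * ‖Ring.inverse s * (a - c) * Ring.inverse t‖ * ‖t‖ := by
        gcongr; exact norm_mul_le _ _
    _ ≤ ‖s‖ * r * ‖t‖ := by gcongr
  have hsa : IsSelfAdjoint s := (CFC.sqrt_nonneg (a := imPart a)).isSelfAdjoint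
  have hta : IsSelfAdjoint t := (CFC.sqrt_nonneg (a := imPart c)).isSelfAdjoint
  have hs2 : ‖s‖ ^ 2 = ‖imPart a‖ := by
    rw [sq, ← CStarRing.norm_star_mul_self, hsa.star_eq, hss]
  have ht2 : ‖t‖ ^ 2 = ‖imPart c‖ := by
    rw [sq, ← CStarRing.norm_star_mul_self, hta.star_eq, htt]
  calc ‖a - c‖ ^ 2 ≤ (‖s‖ * r * ‖t‖) ^ 2 := by
        apply pow_le_pow_left₀ (norm_nonneg _) hbound
  _ = r ^ 2 * ‖imPart a‖ * ‖imPart c‖ := by rw [← hs2, ← ht2]; ring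
end

section
/- With the notation of the noncommutative hyperbolic ball B⁺ₙ(c,r) = {a : Im a > 0, ‖(Im a)^{-1/2}(a−c)(Im c)^{-1/2}‖ ≤ r}: for every a ∈ B⁺ₙ(c,r), (‖Im c‖/2)(r² + 2 − r√(r²+4)) ≤ ‖Im a‖ ≤ (‖Im c‖/2)(r² + 2 + r√(r²+4)). -/
private lemma isUnit_of_mul_self {M : Type*} [Monoid M] {x : M} (h : IsUnit (x * x)) :
    IsUnit x := by
  obtain ⟨u, hu⟩ := h
  have hcomm : Commute x (↑u : M) := by rw [hu]; exact (Commute.refl x).mul_right rfl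
  refine ⟨⟨x, x * ↑u⁻¹, ?_, ?_⟩, rfl⟩
  · rw [← mul_assoc, ← hu, Units.mul_inv]
  · calc x * ↑u⁻¹ * x = x * (↑u⁻¹ * x) := by rw [mul_assoc]
      _ = x * (x * ↑u⁻¹) := by rw [(hcomm.units_inv_right).eq]
      _ = 1 := by rw [← mul_assoc, ← hu, Units.mul_inv]

private lemma norm_cfc_sqrt {A : Type*} [CStarAlgebra A] [PartialOrder A] [StarOrderedRing A]
    {p : A} (hp : 0 ≤ p) : ‖CFC.sqrt p‖ = Real.sqrt ‖p‖ := by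
  have hs : (0:A) ≤ CFC.sqrt p := CFC.sqrt_nonneg p
  have hsa : star (CFC.sqrt p) = CFC.sqrt p := IsSelfAdjoint.of_nonneg hs
  have : ‖CFC.sqrt p‖ * ‖CFC.sqrt p‖ = ‖p‖ := by
    rw [← CStarRing.norm_star_mul_self, hsa, CFC.sqrt_mul_sqrt_self p hp]
  rw [← this, Real.sqrt_mul_self (norm_nonneg _)]

private lemma norm_imPart_le {A : Type*} [CStarAlgebra A] (x : A) : ‖imPart x‖ ≤ ‖x‖ := by
  rw [imPart, norm_smul]
  have h1 : ‖((2 * Complex.I)⁻¹ : ℂ)‖ = 1/2 := by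
    simp [norm_inv, Complex.norm_I]
  rw [h1]
  have := norm_sub_le x (star x)
  rw [norm_star] at this
  linarith

/-- For every `a ∈ B⁺ₙ(c,r)`,
`(‖Im c‖/2)(r² + 2 − r√(r²+4)) ≤ ‖Im a‖ ≤ (‖Im c‖/2)(r² + 2 + r√(r²+4))`. -/
theorem stmt_7 {A : Type*} [CStarAlgebra A] [PartialOrder A] [StarOrderedRing A]
    (c : A) (r : ℝ) (hr : 0 < r) (hc : 0 ≤ imPart c ∧ IsUnit (imPart c))
    (a : A) (ha : a ∈ ncUpperBall c r) :
    ‖imPart c‖ / 2 * (r ^ 2 + 2 - r * Real.sqrt (r ^ 2 + 4)) ≤ ‖imPart a‖ ∧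
      ‖imPart a‖ ≤ ‖imPart c‖ / 2 * (r ^ 2 + 2 + r * Real.sqrt (r ^ 2 + 4)) := by
  obtain ⟨⟨ha0, haU⟩, hax⟩ := ha
  obtain ⟨hc0, hcU⟩ := hc
  -- sqrt units
  have hsaU : IsUnit (CFC.sqrt (imPart a)) :=
    isUnit_of_mul_self (by rwa [CFC.sqrt_mul_sqrt_self _ ha0])
  have hscU : IsUnit (CFC.sqrt (imPart c)) :=
    isUnit_of_mul_self (by rwa [CFC.sqrt_mul_sqrt_self _ hc0])
  -- factorization of a - c
  set x := Ring.inverse (CFC.sqrt (imPart a)) * (a - c) * Ring.inverse (CFC.sqrt (imPart c))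
    with hxdef
  have hfac : a - c = CFC.sqrt (imPart a) * x * CFC.sqrt (imPart c) := by
    rw [hxdef]
    rw [mul_assoc, mul_assoc, Ring.inverse_mul_cancel _ hscU, mul_one,
      ← mul_assoc, Ring.mul_inverse_cancel _ hsaU, one_mul]
  -- norm bound on a - c
  have hnormac : ‖a - c‖ ≤ Real.sqrt ‖imPart a‖ * r * Real.sqrt ‖imPart c‖ := by
    rw [hfac]
    calc ‖CFC.sqrt (imPart a) * x * CFC.sqrt (imPart c)‖
        ≤ ‖CFC.sqrt (imPart a)‖ * ‖x‖ * ‖CFC.sqrt (imPart c)‖ := by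
          refine (norm_mul_le _ _).trans ?_
          gcongr
          exact norm_mul_le _ _
      _ ≤ Real.sqrt ‖imPart a‖ * r * Real.sqrt ‖imPart c‖ := by
          rw [norm_cfc_sqrt ha0, norm_cfc_sqrt hc0]
          gcongr
  -- imPart is additive over subtraction
  have himsub : imPart (a - c) = imPart a - imPart c := by
    rw [imPart, imPart, imPart, star_sub, ← smul_sub]
    congr 1
    abel
  have hkey : |‖imPart a‖ - ‖imPart c‖| ≤ Real.sqrt ‖imPart a‖ * r * Real.sqrt ‖imPart c‖ := by
    calc |‖imPart a‖ - ‖imPart c‖| ≤ ‖imPart a - imPart c‖ := abs_norm_sub_norm_le _ _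
      _ = ‖imPart (a - c)‖ := by rw [himsub]
      _ ≤ ‖a - c‖ := norm_imPart_le _
      _ ≤ _ := hnormac
  -- squares
  set t := ‖imPart a‖ with ht
  set s := ‖imPart c‖ with hs
  have ht0 : 0 ≤ t := norm_nonneg _
  have hs0 : 0 ≤ s := norm_nonneg _
  have hsq : (t - s) ^ 2 ≤ r ^ 2 * t * s := by
    have h1 : |t - s| ^ 2 ≤ (Real.sqrt t * r * Real.sqrt s) ^ 2 := by
      apply pow_le_pow_left₀ (abs_nonneg _) hkey
    rw [sq_abs] at h1
    calc (t - s)^2 ≤ (Real.sqrt t * r * Real.sqrt s)^2 := h1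
      _ = r^2 * (Real.sqrt t ^ 2) * (Real.sqrt s ^ 2) := by ring
      _ = r^2 * t * s := by rw [Real.sq_sqrt ht0, Real.sq_sqrt hs0]
  set q := Real.sqrt (r ^ 2 + 4) with hq
  have hq2 : q ^ 2 = r ^ 2 + 4 := Real.sq_sqrt (by positivity)
  have hq0 : 0 < q := Real.sqrt_pos.mpr (by positivity)
  have hprod : (t - s / 2 * (r ^ 2 + 2 - r * q)) * (t - s / 2 * (r ^ 2 + 2 + r * q)) ≤ 0 := by
    have hq2' : s ^ 2 * r ^ 2 * q ^ 2 = s ^ 2 * r ^ 2 * (r ^ 2 + 4) := by rw [hq2]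
    nlinarith [hsq, hq2']
  have hsrq : 0 ≤ s * r * q := mul_nonneg (mul_nonneg hs0 hr.le) hq0.le
  constructor
  · nlinarith [hprod, hsrq]
  · nlinarith [hprod, hsrq]
end

section
/- With the notation of the noncommutative hyperbolic ball B⁺ₙ(c,r): every a ∈ B⁺ₙ(c,r) satisfies Im a ≥ (1/(2+r²)) Im c. In particular, B⁺ₙ(c,r) is bounded away (in norm) from the boundary of the noncommutative upper half-plane. -/
private lemma aux_isUnit {M : Type*} [Monoid M] {x y z : M} (h1 : x * y = 1) (h2 : z * x = 1) :
    IsUnit x := by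
  have hzy : z = y := by rw [← mul_one z, ← h1, ← mul_assoc, h2, one_mul]
  exact ⟨⟨x, y, h1, hzy ▸ h2⟩, rfl⟩

private lemma aux_sqrt_isUnit {A : Type*} [CStarAlgebra A] [PartialOrder A] [StarOrderedRing A]
    {x : A} (hx : 0 ≤ x) (hu : IsUnit x) : IsUnit (CFC.sqrt x) := by
  have h2 : CFC.sqrt x * CFC.sqrt x = x := CFC.sqrt_mul_sqrt_self x hx
  refine aux_isUnit (y := CFC.sqrt x * Ring.inverse x) (z := Ring.inverse x * CFC.sqrt x) ?_ ?_
  · rw [← mul_assoc, h2, Ring.mul_inverse_cancel _ hu]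
  · rw [mul_assoc, h2, Ring.inverse_mul_cancel _ hu]

private lemma aux_smul_le {A : Type*} [CStarAlgebra A] [PartialOrder A] [StarOrderedRing A]
    {x y : A} (h : x ≤ y) {t : ℝ} (ht : 0 ≤ t) : t • x ≤ t • y := by
  rw [← sub_nonneg, ← smul_sub]
  exact smul_nonneg ht (sub_nonneg.mpr h)

/-- Every `a ∈ B⁺ₙ(c,r)` satisfies `Im a ≥ (1/(2+r²)) Im c`. -/
theorem stmt_8 {A : Type*} [CStarAlgebra A] [PartialOrder A] [StarOrderedRing A]
    (c : A) (r : ℝ) (hr : 0 < r) (hc : 0 ≤ imPart c ∧ IsUnit (imPart c))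
    (a : A) (ha : a ∈ ncUpperBall c r) :
    ((2 + r ^ 2)⁻¹ : ℝ) • imPart c ≤ imPart a := by
  obtain ⟨⟨hβ, hβu⟩, hnorm⟩ := ha
  obtain ⟨hγ, hγu⟩ := hc
  set β := imPart a with hβdef
  set γ := imPart c with hγdef
  set b := CFC.sqrt β with hbdef
  set g := CFC.sqrt γ with hgdef
  have hb2 : b * b = β := CFC.sqrt_mul_sqrt_self β hβ
  have hg2 : g * g = γ := CFC.sqrt_mul_sqrt_self γ hγ
  have hbsa : star b = b := (IsSelfAdjoint.of_nonneg (CFC.sqrt_nonneg (a := β))).star_eq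
  have hgsa : star g = g := (IsSelfAdjoint.of_nonneg (CFC.sqrt_nonneg (a := γ))).star_eq
  have hbu : IsUnit b := aux_sqrt_isUnit hβ hβu
  have hgu : IsUnit g := aux_sqrt_isUnit hγ hγu
  set z := Ring.inverse b * (a - c) * Ring.inverse g with hzdef
  have hz : ‖z‖ ≤ r := hnorm
  -- a - c = b * (z * g)
  have hx : b * (z * g) = a - c := by
    rw [hzdef]
    calc b * (Ring.inverse b * (a - c) * Ring.inverse g * g)
        = (b * Ring.inverse b) * ((a - c) * (Ring.inverse g * g)) := by
          simp only [mul_assoc]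
      _ = a - c := by
          rw [Ring.mul_inverse_cancel _ hbu, Ring.inverse_mul_cancel _ hgu, one_mul, mul_one]
  -- imPart (a - c) = β - γ
  have him : imPart (a - c) = β - γ := by
    rw [hβdef, hγdef]
    simp only [imPart, star_sub, smul_sub]
    abel
  -- key expansion
  set w : A := (r:ℂ) • b - ((r:ℂ)⁻¹ * Complex.I) • (z * g) with hwdef
  have hrc : (r:ℂ) ≠ 0 := by exact_mod_cast hr.ne'
  have hw : star w * w
      = ((r^2 : ℝ)) • (b*b) + ((r^2 : ℝ)⁻¹) • (g * (star z * z) * g)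
        + (2:ℝ) • imPart (b * (z * g)) := by
    rw [hwdef]
    simp only [imPart, star_sub, star_smul, star_mul, map_mul, map_inv₀, Complex.conj_ofReal,
      Complex.conj_I, hbsa, hgsa]
    show _ = ((r^2 : ℝ):ℂ) • (b*b) + (((r^2 : ℝ)⁻¹ :ℝ):ℂ) • (g * (star z * z) * g) + ((2:ℝ):ℂ) • _
    push_cast
    simp only [smul_sub, sub_mul, mul_sub, smul_mul_assoc, mul_smul_comm, smul_smul, mul_assoc]
    match_scalars <;> field_simp <;> simp [Complex.star_def] <;> field_simp <;> ring_nf <;> simp [Complex.I_sq]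
  have hpos : (0:A) ≤ (r^2 : ℝ) • β + (r^2 : ℝ)⁻¹ • (g * (star z * z) * g)
      + (2:ℝ) • (β - γ) := by
    have := star_mul_self_nonneg w
    rw [hw, hx, him, hb2] at this
    exact this
  -- bound the middle term: g (z* z) g ≤ r² γ
  have hone : (0:A) ≤ 1 := by simpa using star_mul_self_nonneg (1 : A)
  have hzz : star z * z ≤ (r^2 : ℝ) • 1 := by
    have h1 : star z * z ≤ algebraMap ℝ A ‖star z * z‖ :=
      (IsSelfAdjoint.star_mul_self z).le_algebraMap_norm_self
    have h2 : ‖star z * z‖ ≤ r^2 := by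
      rw [CStarRing.norm_star_mul_self]
      calc ‖z‖ * ‖z‖ ≤ r * r := mul_le_mul hz hz (norm_nonneg z) hr.le
        _ = r^2 := (sq r).symm
    calc star z * z ≤ algebraMap ℝ A ‖star z * z‖ := h1
      _ ≤ (r^2 : ℝ) • 1 := by
          rw [Algebra.algebraMap_eq_smul_one, ← sub_nonneg, ← sub_smul]
          exact smul_nonneg (by linarith) hone
  have hmid : g * (star z * z) * g ≤ (r^2 : ℝ) • γ := by
    calc g * (star z * z) * g = star g * (star z * z) * g := by rw [hgsa]
      _ ≤ star g * ((r^2 : ℝ) • 1) * g := star_left_conjugate_le_conjugate hzz g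
      _ = (r^2 : ℝ) • γ := by
          rw [hgsa, ← hg2]
          simp [mul_smul_comm, smul_mul_assoc]
  have hmid' : (r^2 : ℝ)⁻¹ • (g * (star z * z) * g) ≤ γ := by
    have := aux_smul_le hmid (t := (r^2 : ℝ)⁻¹) (by positivity)
    rwa [smul_smul, inv_mul_cancel₀ (by positivity), one_smul] at this
  -- combine: γ ≤ (2 + r²) • β
  have hfinal : γ ≤ (2 + r^2 : ℝ) • β := by
    rw [← sub_nonneg]
    have key : (2 + r^2 : ℝ) • β - γ
        = ((r^2 : ℝ) • β + (r^2 : ℝ)⁻¹ • (g * (star z * z) * g) + (2:ℝ) • (β - γ))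
          + (γ - (r^2 : ℝ)⁻¹ • (g * (star z * z) * g)) := by
      module
    rw [key]
    exact add_nonneg hpos (sub_nonneg.mpr hmid')
  -- conclude
  rw [← sub_nonneg]
  have hgoal : β - ((2 + r^2 : ℝ)⁻¹) • γ = ((2 + r^2 : ℝ)⁻¹) • ((2 + r^2 : ℝ) • β - γ) := by
    rw [smul_sub, smul_smul, inv_mul_cancel₀ (by positivity), one_smul]
  rw [hgoal]
  exact smul_nonneg (by positivity) (sub_nonneg.mpr hfinal)
end

section
/- With the notation of the noncommutative hyperbolic ball: B⁺ₙ(c,r) is a convex subset of Mₙ(A). Specifically, if a₁, a₂ ∈ B⁺ₙ(c,r) then (a₁+a₂)/2 ∈ B⁺ₙ(c,r). -/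
section aux
variable {A : Type*} [CStarAlgebra A] [PartialOrder A] [StarOrderedRing A]

private lemma imPart_smul_real' (t : ℝ) (x : A) : imPart (t • x) = t • imPart x := by
  unfold imPart
  rw [star_smul, star_trivial, ← smul_sub, smul_comm]

private lemma imPart_add' (x y : A) : imPart (x + y) = imPart x + imPart y := by
  unfold imPart
  rw [star_add, ← smul_add]
  congr 1
  abel

private lemma isUnit_sqrt' {p : A} (hp : 0 ≤ p) (hu : IsUnit p) : IsUnit (CFC.sqrt p) := by
  set s := CFC.sqrt p with hs
  have hsq : s * s = p := CFC.sqrt_mul_sqrt_self p hp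
  have h1 : s * p = p * s := by rw [← hsq, mul_assoc]
  have hcomm : Ring.inverse p * s = s * Ring.inverse p := by
    have h2 := congrArg (fun z => Ring.inverse p * z * Ring.inverse p) h1
    simpa [mul_assoc, Ring.mul_inverse_cancel p hu, Ring.inverse_mul_cancel_left p _ hu,
      Ring.mul_inverse_cancel_right] using h2
  refine isUnit_iff_exists.mpr ⟨s * Ring.inverse p, ?_, ?_⟩
  · rw [← mul_assoc, hsq, Ring.mul_inverse_cancel p hu]
  · rw [← hcomm, mul_assoc, hsq, Ring.inverse_mul_cancel p hu]

private lemma norm_le_iff_mul_star_le' {y : A} {r : ℝ} (hr : 0 < r) :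
    ‖y‖ ≤ r ↔ y * star y ≤ algebraMap ℝ A (r ^ 2) := by
  constructor
  · intro h
    calc y * star y ≤ algebraMap ℝ A ‖y * star y‖ :=
          IsSelfAdjoint.le_algebraMap_norm_self (IsSelfAdjoint.mul_star_self y)
      _ ≤ algebraMap ℝ A (r ^ 2) := by
          rw [← sub_nonneg, ← map_sub, Algebra.algebraMap_eq_smul_one]
          refine smul_nonneg ?_ zero_le_one
          rw [sub_nonneg, CStarRing.norm_self_mul_star, sq]
          exact mul_le_mul h h (norm_nonneg y) hr.le
  · intro h
    rcases subsingleton_or_nontrivial A with hA | hA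
    · simpa [Subsingleton.elim y 0] using hr.le
    have h0 : 0 ≤ y * star y := mul_star_self_nonneg y
    have h1 := CStarAlgebra.norm_le_norm_of_nonneg_of_le h0 h
    rw [CStarRing.norm_self_mul_star] at h1
    have h2 : ‖algebraMap ℝ A (r ^ 2)‖ = r ^ 2 := by
      rw [norm_algebraMap', Real.norm_eq_abs, abs_of_nonneg (by positivity)]
    nlinarith [norm_nonneg y]

private lemma inverse_selfAdjoint' {p : A} (hp : 0 ≤ p) :
    star (Ring.inverse p) = Ring.inverse p := by
  rw [← Ring.inverse_star, (IsSelfAdjoint.of_nonneg hp).star_eq]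

private lemma conj_inverse_nonneg' {p : A} (hp : 0 ≤ p) (d : A) :
    0 ≤ d * Ring.inverse p * star d := by
  obtain ⟨x, hx⟩ : ∃ x : A, Ring.inverse p = star x * x := by
    refine ⟨Ring.inverse (CFC.sqrt p), ?_⟩
    rw [inverse_selfAdjoint' (CFC.sqrt_nonneg (a := p)),
      ← Ring.mul_inverse_rev' (Commute.refl _), CFC.sqrt_mul_sqrt_self p hp]
  rw [hx, ← mul_assoc, mul_assoc (d * star x)]
  have hst : star (d * star x) = x * star d := by rw [star_mul, star_star]
  calc (0 : A) ≤ (d * star x) * star (d * star x) := mul_star_self_nonneg _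
    _ = d * star x * (x * star d) := by rw [hst]

private lemma mem_ncUpperBall_iff' {c : A} (hc0 : 0 ≤ imPart c) (hcu : IsUnit (imPart c))
    {r : ℝ} (hr : 0 < r) (a : A) :
    a ∈ ncUpperBall c r ↔ (0 ≤ imPart a ∧ IsUnit (imPart a)) ∧
      (a - c) * Ring.inverse (imPart c) * star (a - c) ≤ (r ^ 2 : ℝ) • imPart a := by
  refine and_congr_right fun ⟨ha0, hau⟩ => ?_
  set s := CFC.sqrt (imPart a) with hsdef
  set w := CFC.sqrt (imPart c) with hwdef
  have hs0 : (0 : A) ≤ s := CFC.sqrt_nonneg _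
  have hw0 : (0 : A) ≤ w := CFC.sqrt_nonneg _
  have hsu : IsUnit s := isUnit_sqrt' ha0 hau
  have hwu : IsUnit w := isUnit_sqrt' hc0 hcu
  have hsi : star (Ring.inverse s) = Ring.inverse s := inverse_selfAdjoint' hs0
  have hwi : star (Ring.inverse w) = Ring.inverse w := inverse_selfAdjoint' hw0
  set b := a - c with hbdef
  set X := b * Ring.inverse (imPart c) * star b with hXdef
  have htt : Ring.inverse w * Ring.inverse w = Ring.inverse (imPart c) := by
    rw [← CFC.sqrt_mul_sqrt_self (imPart c) hc0, Ring.mul_inverse_rev' (Commute.refl w)]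
  have hyy : (Ring.inverse s * b * Ring.inverse w) * star (Ring.inverse s * b * Ring.inverse w)
      = Ring.inverse s * X * Ring.inverse s := by
    rw [hXdef, ← htt, star_mul, star_mul, hsi, hwi]
    simp only [mul_assoc]
  rw [norm_le_iff_mul_star_le' hr, hyy]
  constructor
  · intro h
    have h2 := star_left_conjugate_le_conjugate h s
    rw [(IsSelfAdjoint.of_nonneg hs0).star_eq] at h2
    have hl : s * (Ring.inverse s * X * Ring.inverse s) * s = X := by
      simp only [← mul_assoc]
      rw [Ring.mul_inverse_cancel s hsu, one_mul, mul_assoc, Ring.inverse_mul_cancel s hsu,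
        mul_one]
    have hrr : s * algebraMap ℝ A (r ^ 2) * s = (r ^ 2 : ℝ) • imPart a := by
      rw [Algebra.algebraMap_eq_smul_one, mul_smul_comm, mul_one, smul_mul_assoc,
        CFC.sqrt_mul_sqrt_self (imPart a) ha0]
    rwa [hl, hrr] at h2
  · intro h
    have h2 := star_left_conjugate_le_conjugate h (Ring.inverse s)
    rw [hsi] at h2
    have hrr : Ring.inverse s * ((r ^ 2 : ℝ) • imPart a) * Ring.inverse s
        = algebraMap ℝ A (r ^ 2) := by
      rw [← CFC.sqrt_mul_sqrt_self (imPart a) ha0, mul_smul_comm, smul_mul_assoc]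
      have h1 : Ring.inverse s * (s * s) * Ring.inverse s = 1 := by
        simp only [← mul_assoc]
        rw [Ring.inverse_mul_cancel s hsu, one_mul, Ring.mul_inverse_cancel s hsu]
      rw [h1, ← Algebra.algebraMap_eq_smul_one]
    rwa [hrr] at h2

private lemma combo_mem' {c : A} {r : ℝ} (hr : 0 < r)
    (hc0 : 0 ≤ imPart c) (hcu : IsUnit (imPart c)) {a₁ a₂ : A}
    (h₁ : a₁ ∈ ncUpperBall c r) (h₂ : a₂ ∈ ncUpperBall c r)
    {t u : ℝ} (ht : 0 ≤ t) (hu : 0 ≤ u) (htu : t + u = 1) :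
    t • a₁ + u • a₂ ∈ ncUpperBall c r := by
  obtain rfl : u = 1 - t := by linarith
  have ht1 : t ≤ 1 := by linarith
  rcases eq_or_lt_of_le ht with h | htpos
  · simpa [← h] using h₂
  rcases eq_or_lt_of_le ht1 with h | htlt
  · simpa [h] using h₁
  have hu0 : (0 : ℝ) < 1 - t := by linarith
  rw [mem_ncUpperBall_iff' hc0 hcu hr] at h₁ h₂ ⊢
  obtain ⟨⟨h₁0, h₁u⟩, h₁q⟩ := h₁
  obtain ⟨⟨h₂0, h₂u⟩, h₂q⟩ := h₂
  have him : imPart (t • a₁ + (1 - t) • a₂) = t • imPart a₁ + (1 - t) • imPart a₂ := by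
    rw [imPart_add', imPart_smul_real', imPart_smul_real']
  have hIm0 : 0 ≤ imPart (t • a₁ + (1 - t) • a₂) := by
    rw [him]
    exact add_nonneg (smul_nonneg ht h₁0) (smul_nonneg hu0.le h₂0)
  have hImU : IsUnit (imPart (t • a₁ + (1 - t) • a₂)) := by
    have hle : t • imPart a₁ ≤ imPart (t • a₁ + (1 - t) • a₂) := by
      rw [him]
      exact le_add_of_nonneg_right (smul_nonneg hu0.le h₂0)
    have htn : 0 ≤ t • imPart a₁ := smul_nonneg ht h₁0
    have htU : IsUnit (t • imPart a₁) := by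
      have heq : t • imPart a₁ = algebraMap ℝ A t * imPart a₁ := by
        rw [Algebra.algebraMap_eq_smul_one, smul_mul_assoc, one_mul]
      rw [heq]
      exact ((htpos.ne'.isUnit).map (algebraMap ℝ A)).mul h₁u
    exact CStarAlgebra.isUnit_of_le _ hle (htU.isStrictlyPositive htn)
  refine ⟨⟨hIm0, hImU⟩, ?_⟩
  set e := Ring.inverse (imPart c) with hedef
  set b₁ := a₁ - c with hb₁
  set b₂ := a₂ - c with hb₂
  have hb : t • a₁ + (1 - t) • a₂ - c = t • b₁ + (1 - t) • b₂ := by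
    rw [hb₁, hb₂]
    module
  have key : t • (b₁ * e * star b₁) + (1 - t) • (b₂ * e * star b₂)
      = (t • b₁ + (1 - t) • b₂) * e * star (t • b₁ + (1 - t) • b₂)
        + (t * (1 - t)) • ((b₁ - b₂) * e * star (b₁ - b₂)) := by
    simp only [star_add, star_smul, star_sub, star_trivial, add_mul, mul_add, sub_mul, mul_sub,
      smul_mul_assoc, mul_smul_comm, smul_smul, smul_sub, smul_add, mul_assoc]
    match_scalars <;> ring
  have hpos : 0 ≤ (t * (1 - t)) • ((b₁ - b₂) * e * star (b₁ - b₂)) :=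
    smul_nonneg (by positivity) (conj_inverse_nonneg' hc0 _)
  calc (t • a₁ + (1 - t) • a₂ - c) * e * star (t • a₁ + (1 - t) • a₂ - c)
      ≤ (t • a₁ + (1 - t) • a₂ - c) * e * star (t • a₁ + (1 - t) • a₂ - c)
        + (t * (1 - t)) • ((b₁ - b₂) * e * star (b₁ - b₂)) := le_add_of_nonneg_right hpos
    _ = t • (b₁ * e * star b₁) + (1 - t) • (b₂ * e * star b₂) := by rw [hb, ← key]
    _ ≤ t • ((r ^ 2 : ℝ) • imPart a₁) + (1 - t) • ((r ^ 2 : ℝ) • imPart a₂) :=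
        add_le_add (smul_le_smul_of_nonneg_left h₁q ht)
          (smul_le_smul_of_nonneg_left h₂q hu0.le)
    _ = (r ^ 2 : ℝ) • imPart (t • a₁ + (1 - t) • a₂) := by
        rw [him, smul_add, smul_comm t, smul_comm (1 - t)]

end aux

/-- `B⁺ₙ(c,r)` is a convex subset; in particular it contains midpoints of its members. -/
theorem stmt_9 {A : Type*} [CStarAlgebra A] [PartialOrder A] [StarOrderedRing A]
    (c : A) (r : ℝ) (hr : 0 < r) (hc : 0 ≤ imPart c ∧ IsUnit (imPart c)) :
    Convex ℝ (ncUpperBall c r) ∧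
      ∀ a₁ ∈ ncUpperBall c r, ∀ a₂ ∈ ncUpperBall c r,
        ((2 : ℝ)⁻¹) • (a₁ + a₂) ∈ ncUpperBall c r := by
  obtain ⟨hc0, hcu⟩ := hc
  constructor
  · intro x hx y hy t u ht hu htu
    exact combo_mem' hr hc0 hcu hx hy ht hu htu
  · intro a₁ h₁ a₂ h₂
    have h := combo_mem' hr hc0 hcu h₁ h₂ (t := (2 : ℝ)⁻¹) (u := (2 : ℝ)⁻¹)
      (by norm_num) (by norm_num) (by norm_num)
    rwa [← smul_add] at h
end

section
/- Let f : ℂ⁺ → ℂ⁺ be analytic, α ∈ ℝ, and suppose c := liminf_{z→α} Im f(z)/Im z < ∞. Then f has a finite limit f(α) along every sequence zₙ → α with Im f(zₙ)/Im zₙ bounded, f(α) ∈ ℝ, and for all z ∈ ℂ⁺, |(f(z) − f(α))/(z − α)|² ≤ c · Im f(z)/Im z. -/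
open Filter Topology

section SPaux
open Metric

lemma abs_sub_conj_sq (u v : ℂ) :
    ‖u - (starRingEnd ℂ) v‖ ^ 2 = ‖u - v‖ ^ 2 + 4 * u.im * v.im := by
  rw [Complex.sq_norm, Complex.sq_norm]
  simp [Complex.normSq_apply, Complex.sub_re, Complex.sub_im]
  ring

lemma sub_conj_ne {u v : ℂ} (hu : 0 < u.im) (hv : 0 < v.im) :
    u - (starRingEnd ℂ) v ≠ 0 := by
  intro h
  rw [sub_eq_zero] at h
  have : u.im = -v.im := by rw [h]; simp
  linarith

lemma abs_lt_abs_conj {u v : ℂ} (hu : 0 < u.im) (hv : 0 < v.im) :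
    ‖u - v‖ < ‖u - (starRingEnd ℂ) v‖ := by
  have h := abs_sub_conj_sq u v
  nlinarith [norm_nonneg (u - v), norm_nonneg (u - (starRingEnd ℂ) v),
    mul_pos hu hv]

lemma schwarz_pick {f : ℂ → ℂ} (hf : DifferentiableOn ℂ f {z : ℂ | 0 < z.im})
    (hmap : ∀ z : ℂ, 0 < z.im → 0 < (f z).im) {z w : ℂ} (hz : 0 < z.im) (hw : 0 < w.im) :
    ‖f z - f w‖ ^ 2 * (z.im * w.im) ≤
      ((f z).im * (f w).im) * ‖z - w‖ ^ 2 := by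
  set S : Set ℂ := {z : ℂ | 0 < z.im} with hS
  set b := f w with hb
  have hbim : 0 < b.im := hmap w hw
  set ψ : ℂ → ℂ := fun ζ => (w - (starRingEnd ℂ) w * ζ) / (1 - ζ) with hψ
  set C : ℂ → ℂ := fun u => (u - b) / (u - (starRingEnd ℂ) b) with hC
  have hne1 : ∀ ζ ∈ ball (0:ℂ) 1, (1:ℂ) - ζ ≠ 0 := by
    intro ζ hζ h
    rw [sub_eq_zero] at h
    rw [mem_ball_zero_iff, ← h] at hζ
    simp at hζ
  have hψim : ∀ ζ ∈ ball (0:ℂ) 1, 0 < (ψ ζ).im := by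
    intro ζ hζ
    have hd := hne1 ζ hζ
    have h1 : Complex.normSq ζ < 1 := by
      rw [mem_ball_zero_iff] at hζ
      have hζ' : ‖ζ‖ < 1 := by exact hζ
      have : ‖ζ‖ ^ 2 < 1 := by nlinarith [norm_nonneg ζ]
      rwa [Complex.sq_norm] at this
    have h2 : 0 < Complex.normSq (1 - ζ) := Complex.normSq_pos.2 hd
    have heq : (ψ ζ).im = w.im * (1 - Complex.normSq ζ) / Complex.normSq (1 - ζ) := by
      rw [hψ]
      simp only [Complex.div_im, Complex.normSq_apply, Complex.sub_re, Complex.sub_im,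
        Complex.mul_re, Complex.mul_im, Complex.conj_re, Complex.conj_im, Complex.one_re,
        Complex.one_im]
      ring
    rw [heq]
    exact div_pos (mul_pos hw (by linarith)) h2
  have hψdiff : DifferentiableOn ℂ ψ (ball 0 1) :=
    DifferentiableOn.div
      ((differentiableOn_const _).sub ((differentiableOn_const _).mul differentiableOn_id))
      ((differentiableOn_const _).sub differentiableOn_id) hne1
  have hCmem : ∀ u : ℂ, 0 < u.im → ‖C u‖ < 1 := by
    intro u hu
    have hlt := abs_lt_abs_conj hu hbim
    have hpos : 0 < ‖u - (starRingEnd ℂ) b‖ :=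
      (norm_pos_iff.mpr (sub_conj_ne hu hbim))
    rw [hC]
    simp only [norm_div]
    rw [div_lt_one hpos]
    exact hlt
  have hCdiff : DifferentiableOn ℂ C S :=
    DifferentiableOn.div (differentiableOn_id.sub (differentiableOn_const _))
      (differentiableOn_id.sub (differentiableOn_const _))
      (fun u hu => sub_conj_ne hu hbim)
  set g : ℂ → ℂ := fun ζ => C (f (ψ ζ)) with hg
  have hmapsψ : Set.MapsTo ψ (ball 0 1) S := fun ζ hζ => hψim ζ hζ
  have hmapsf : Set.MapsTo f S S := fun u hu => hmap u hu
  have hgdiff : DifferentiableOn ℂ g (ball 0 1) := by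
    have := (hCdiff.comp (hf.comp hψdiff hmapsψ) (hmapsf.comp hmapsψ))
    exact this
  have hψ0 : ψ 0 = w := by simp [hψ]
  have hg0 : g 0 = 0 := by
    rw [hg]
    simp only [hψ0, ← hb, hC]
    simp
  have hgmaps : Set.MapsTo g (ball 0 1) (ball 0 1) := by
    intro ζ hζ
    rw [mem_ball_zero_iff]
    exact hCmem (f (ψ ζ)) (hmap _ (hψim ζ hζ))
  have hzw : z - (starRingEnd ℂ) w ≠ 0 := sub_conj_ne hz hw
  set ζ₀ : ℂ := (z - w) / (z - (starRingEnd ℂ) w) with hζ₀def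
  have hζ₀ : ‖ζ₀‖ < 1 := by
    rw [hζ₀def, norm_div, div_lt_one (norm_pos_iff.mpr hzw)]
    exact abs_lt_abs_conj hz hw
  have hζ₀ball : ζ₀ ∈ ball (0:ℂ) 1 := mem_ball_zero_iff.2 (by simpa using hζ₀)
  have h1ζ₀ : (1:ℂ) - ζ₀ ≠ 0 := hne1 _ hζ₀ball
  have hψζ₀ : ψ ζ₀ = z := by
    rw [hψ]
    simp only
    rw [div_eq_iff h1ζ₀, hζ₀def]
    field_simp
    ring
  have hfzim : 0 < (f z).im := hmap z hz
  have hfzb : 0 < ‖f z - (starRingEnd ℂ) b‖ := norm_pos_iff.mpr (sub_conj_ne hfzim hbim)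
  have habs : ‖f z - b‖ * ‖z - (starRingEnd ℂ) w‖ ≤
      ‖z - w‖ * ‖f z - (starRingEnd ℂ) b‖ := by
    have h := Complex.norm_le_norm_of_mapsTo_ball hgdiff (hgmaps.mono_right ball_subset_closedBall) hg0 (by simpa using hζ₀)
    rw [hg] at h
    simp only [hψζ₀] at h
    rw [hC] at h
    simp only [norm_div, hζ₀def] at h
    rwa [div_le_div_iff₀ hfzb (norm_pos_iff.mpr hzw)] at h
  have key1 := abs_sub_conj_sq (f z) b
  have key2 := abs_sub_conj_sq z w
  nlinarith [habs, key1, key2, norm_nonneg (f z - b), norm_nonneg (z - w),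
    norm_nonneg (z - (starRingEnd ℂ) w), norm_nonneg (f z - (starRingEnd ℂ) b),
    mul_pos hz hw, mul_pos hfzim hbim,
    mul_le_mul habs habs (by positivity) (by positivity)]

end SPaux

/-- Let `f : ℂ⁺ → ℂ⁺` be analytic, `α ∈ ℝ`, and suppose
`c := liminf_{z→α} Im f(z)/Im z < ∞`.  Then `f` has a finite limit `f(α)` along every sequence
`zₙ → α` in `ℂ⁺` with `Im f(zₙ)/Im zₙ` bounded, `f(α)` is real, and for all `z ∈ ℂ⁺`,
`|(f z − f(α))/(z − α)|² ≤ c · Im f(z)/Im z`. -/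
theorem stmt_13 (f : ℂ → ℂ)
    (hf : DifferentiableOn ℂ f {z : ℂ | 0 < z.im})
    (hmap : ∀ z : ℂ, 0 < z.im → 0 < (f z).im)
    (α : ℝ) (c : ℝ)
    (hc : Filter.liminf (fun z : ℂ => (((f z).im / z.im : ℝ) : EReal))
        (𝓝[{z : ℂ | 0 < z.im}] (α : ℂ)) = (c : EReal)) :
    ∃ L : ℝ,
      (∀ zs : ℕ → ℂ, (∀ n, 0 < (zs n).im) → Tendsto zs atTop (𝓝 (α : ℂ)) →
        (∃ M : ℝ, ∀ n, (f (zs n)).im / (zs n).im ≤ M) →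
        Tendsto (fun n => f (zs n)) atTop (𝓝 (L : ℂ))) ∧
      ∀ z : ℂ, 0 < z.im →
        ‖(f z - L) / (z - α)‖ ^ 2 ≤ c * (f z).im / z.im := by
  -- c is nonnegative
  have hc0 : 0 ≤ c := by
    have hev : ∀ᶠ x in 𝓝[{z : ℂ | 0 < z.im}] (α : ℂ),
        ((0 : ℝ) : EReal) ≤ (((f x).im / x.im : ℝ) : EReal) := by
      filter_upwards [self_mem_nhdsWithin] with x hx
      exact_mod_cast div_nonneg (hmap x hx).le (le_of_lt hx)
    have h0 := Filter.le_liminf_of_le (by isBoundedDefault) hev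
    rw [hc] at h0
    exact_mod_cast h0
  -- minimizing sequence
  have hfreq : ∀ k : ℕ, ∃ x : ℂ, 0 < x.im ∧ dist x (α : ℂ) < 1 / (k + 1) ∧
      (f x).im / x.im < c + 1 / (k + 1) := by
    intro k
    have hpos : (0 : ℝ) < 1 / ((k : ℝ) + 1) := by positivity
    have hlt : Filter.liminf (fun z : ℂ => (((f z).im / z.im : ℝ) : EReal))
        (𝓝[{z : ℂ | 0 < z.im}] (α : ℂ)) < ((c + 1 / (k + 1) : ℝ) : EReal) := by
      rw [hc]
      exact_mod_cast (by linarith : c < c + 1 / ((k : ℝ) + 1))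
    have h1 : ∃ᶠ x in 𝓝[{z : ℂ | 0 < z.im}] (α : ℂ),
        (((f x).im / x.im : ℝ) : EReal) < ((c + 1 / (k + 1) : ℝ) : EReal) :=
      Filter.frequently_lt_of_liminf_lt (by isBoundedDefault) hlt
    have h2 : ∀ᶠ x in 𝓝[{z : ℂ | 0 < z.im}] (α : ℂ),
        0 < x.im ∧ dist x (α : ℂ) < 1 / (k + 1) := by
      filter_upwards [self_mem_nhdsWithin,
        mem_nhdsWithin_of_mem_nhds (Metric.ball_mem_nhds (α : ℂ) hpos)] with x hx hx'
      exact ⟨hx, hx'⟩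
    obtain ⟨x, hx1, hx2, hx3⟩ := (h1.and_eventually h2).exists
    exact ⟨x, hx2, hx3, by exact_mod_cast hx1⟩
  choose w hwim hwdist hwr using hfreq
  have honek : Tendsto (fun k : ℕ => 1 / ((k : ℝ) + 1)) atTop (𝓝 0) :=
    tendsto_one_div_add_atTop_nhds_zero_nat
  -- w tends to α
  have hwtend : Tendsto w atTop (𝓝 (α : ℂ)) := by
    rw [tendsto_iff_dist_tendsto_zero]
    exact squeeze_zero (fun k => dist_nonneg) (fun k => (hwdist k).le) honek
  -- f ∘ w is Cauchy
  have hrle : ∀ k, (f (w k)).im / (w k).im ≤ c + 1 := by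
    intro k
    have h1 : 1 / ((k : ℝ) + 1) ≤ 1 := by
      rw [div_le_one (by positivity)]; simp
    linarith [hwr k]
  have hrnn : ∀ k, 0 ≤ (f (w k)).im / (w k).im := fun k =>
    div_nonneg (hmap _ (hwim k)).le (hwim k).le
  have hlip : ∀ j k, dist (f (w j)) (f (w k)) ≤ (c + 1) * dist (w j) (w k) := by
    intro j k
    have hSP := schwarz_pick hf hmap (hwim j) (hwim k)
    have hwj := hwim j; have hwk := hwim k
    have hfj := hmap _ (hwim j); have hfk := hmap _ (hwim k)
    have hd1 : ‖f (w j) - f (w k)‖ ^ 2 ≤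
        ((f (w j)).im / (w j).im) * ((f (w k)).im / (w k).im) *
          ‖w j - w k‖ ^ 2 := by
      rw [div_mul_div_comm, div_mul_eq_mul_div, le_div_iff₀ (by positivity)]
      linarith [hSP]
    have hd2 : ((f (w j)).im / (w j).im) * ((f (w k)).im / (w k).im) ≤ (c + 1) ^ 2 := by
      have := mul_le_mul (hrle j) (hrle k) (hrnn k) (by linarith [hrle j, hrnn j])
      nlinarith
    have hd3 : ‖f (w j) - f (w k)‖ ^ 2 ≤
        ((c + 1) * ‖w j - w k‖) ^ 2 := by
      calc ‖f (w j) - f (w k)‖ ^ 2 ≤ _ := hd1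
        _ ≤ ((c + 1) * ‖w j - w k‖) ^ 2 := by
            rw [mul_pow]
            exact mul_le_mul_of_nonneg_right hd2 (by positivity)
    have habs : ‖f (w j) - f (w k)‖ ≤ (c + 1) * ‖w j - w k‖ := by
      have h1 : 0 ≤ (c + 1) * ‖w j - w k‖ := by positivity
      nlinarith [norm_nonneg (f (w j) - f (w k))]
    simpa [Complex.dist_eq] using habs
  have hcauchy : CauchySeq (fun k => f (w k)) := by
    rw [Metric.cauchySeq_iff]
    intro ε hε
    have hwc : CauchySeq w := hwtend.cauchySeq
    rw [Metric.cauchySeq_iff] at hwc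
    obtain ⟨N, hN⟩ := hwc (ε / (c + 2)) (by positivity)
    refine ⟨N, fun m hm n hn => ?_⟩
    calc dist (f (w m)) (f (w n)) ≤ (c + 1) * dist (w m) (w n) := hlip m n
      _ < (c + 1) * (ε / (c + 2)) := by
          apply mul_lt_mul_of_le_of_lt_of_nonneg_of_pos le_rfl (hN m hm n hn) dist_nonneg
          · linarith
      _ ≤ ε := by
          rw [mul_div_assoc']
          rw [div_le_iff₀ (by positivity : (0:ℝ) < c + 2)]
          nlinarith
  obtain ⟨L', hL'⟩ := cauchySeq_tendsto_of_complete hcauchy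
  -- L' is real
  have himw : Tendsto (fun k => (w k).im) atTop (𝓝 0) := by
    have := (Complex.continuous_im.tendsto _).comp hwtend
    simpa [Function.comp_def] using this
  have himfw : Tendsto (fun k => (f (w k)).im) atTop (𝓝 0) := by
    apply squeeze_zero (fun k => (hmap _ (hwim k)).le) (g := fun k => (c + 1) * (w k).im)
    · intro k
      have h := hrle k
      have := (hwim k)
      calc (f (w k)).im = ((f (w k)).im / (w k).im) * (w k).im := by
            field_simp
        _ ≤ (c + 1) * (w k).im := mul_le_mul_of_nonneg_right h this.le
    · simpa using himw.const_mul (c + 1)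
  have hL'im : L'.im = 0 := by
    have h1 : Tendsto (fun k => (f (w k)).im) atTop (𝓝 L'.im) :=
      (Complex.continuous_im.tendsto _).comp hL'
    exact tendsto_nhds_unique h1 himfw
  have hLc : ((L'.re : ℝ) : ℂ) = L' := Complex.ext (by simp) (by simp [hL'im])
  -- main inequality
  have main : ∀ z : ℂ, 0 < z.im → ‖f z - L'‖ ^ 2 ≤
      (c * (f z).im / z.im) * ‖z - (α : ℂ)‖ ^ 2 := by
    intro z hz
    have hfz := hmap z hz
    have hstep : ∀ k, ‖f z - f (w k)‖ ^ 2 ≤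
        ((f z).im / z.im) * (c + 1 / (k + 1)) * ‖z - w k‖ ^ 2 := by
      intro k
      have hSP := schwarz_pick hf hmap hz (hwim k)
      have hwk := hwim k
      have hfk := hmap _ (hwim k)
      have hd1 : ‖f z - f (w k)‖ ^ 2 ≤
          ((f z).im / z.im) * ((f (w k)).im / (w k).im) * ‖z - w k‖ ^ 2 := by
        rw [div_mul_div_comm, div_mul_eq_mul_div, le_div_iff₀ (by positivity)]
        linarith [hSP]
      calc ‖f z - f (w k)‖ ^ 2 ≤ _ := hd1
        _ ≤ ((f z).im / z.im) * (c + 1 / (k + 1)) * ‖z - w k‖ ^ 2 := by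
            apply mul_le_mul_of_nonneg_right _ (by positivity)
            exact mul_le_mul_of_nonneg_left (hwr k).le (by positivity)
    have hA : Tendsto (fun k => ‖f z - f (w k)‖ ^ 2) atTop
        (𝓝 (‖f z - L'‖ ^ 2)) := by
      have hcont : Continuous fun u : ℂ => ‖f z - u‖ ^ 2 :=
        (continuous_norm.comp (continuous_const.sub continuous_id)).pow 2
      exact (hcont.tendsto _).comp hL'
    have hB : Tendsto (fun k : ℕ => ((f z).im / z.im) * (c + 1 / ((k : ℝ) + 1)) *
        ‖z - w k‖ ^ 2) atTop
        (𝓝 (((f z).im / z.im) * c * ‖z - (α : ℂ)‖ ^ 2)) := by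
      have h1 : Tendsto (fun k : ℕ => c + 1 / ((k : ℝ) + 1)) atTop (𝓝 c) := by
        simpa using (tendsto_const_nhds (x := c)).add honek
      have h2 : Tendsto (fun k => ‖z - w k‖ ^ 2) atTop
          (𝓝 (‖z - (α : ℂ)‖ ^ 2)) := by
        have hcont : Continuous fun u : ℂ => ‖z - u‖ ^ 2 :=
          (continuous_norm.comp (continuous_const.sub continuous_id)).pow 2
        exact (hcont.tendsto _).comp hwtend
      exact (tendsto_const_nhds.mul h1).mul h2
    have := le_of_tendsto_of_tendsto' hA hB hstep
    calc ‖f z - L'‖ ^ 2 ≤ _ := this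
      _ = (c * (f z).im / z.im) * ‖z - (α : ℂ)‖ ^ 2 := by ring
  refine ⟨L'.re, ?_, ?_⟩
  · -- sequence part
    intro zs hzs hzstend ⟨M, hM⟩
    rw [hLc, tendsto_iff_dist_tendsto_zero]
    have hzsd : Tendsto (fun n => ‖zs n - (α : ℂ)‖) atTop (𝓝 0) := by
      simp only [← Complex.dist_eq]
      rwa [← tendsto_iff_dist_tendsto_zero]
    have hbound : ∀ n, dist (f (zs n)) L' ^ 2 ≤ (c * M) * ‖zs n - (α : ℂ)‖ ^ 2 := by
      intro n
      rw [Complex.dist_eq]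
      calc ‖f (zs n) - L'‖ ^ 2 ≤
          (c * (f (zs n)).im / (zs n).im) * ‖zs n - (α : ℂ)‖ ^ 2 :=
            main (zs n) (hzs n)
        _ ≤ (c * M) * ‖zs n - (α : ℂ)‖ ^ 2 := by
            apply mul_le_mul_of_nonneg_right _ (by positivity)
            rw [mul_div_assoc]
            exact mul_le_mul_of_nonneg_left (hM n) hc0
    have hsq : Tendsto (fun n => dist (f (zs n)) L' ^ 2) atTop (𝓝 0) := by
      apply squeeze_zero (fun n => by positivity) hbound
      have : Tendsto (fun n => ‖zs n - (α : ℂ)‖ ^ 2) atTop (𝓝 0) := by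
        simpa using hzsd.pow 2
      simpa using this.const_mul (c * M)
    have := (Real.continuous_sqrt.tendsto 0).comp hsq
    simp only [Function.comp_def] at this
    rw [Real.sqrt_zero] at this
    exact this.congr fun n => Real.sqrt_sq dist_nonneg
  · -- pointwise inequality
    intro z hz
    have hza : z - (α : ℂ) ≠ 0 := by
      intro h
      rw [sub_eq_zero] at h
      rw [h] at hz
      simp at hz
    rw [norm_div, div_pow, div_le_iff₀ (pow_pos (norm_pos_iff.mpr hza) 2)]
    calc ‖f z - ((L'.re : ℝ) : ℂ)‖ ^ 2
        = ‖f z - L'‖ ^ 2 := by rw [hLc]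
      _ ≤ (c * (f z).im / z.im) * ‖z - (α : ℂ)‖ ^ 2 := main z hz
end

section
/- Let f : ℂ⁺ → ℂ⁺ be analytic, α ∈ ℝ with c = liminf_{z→α} Im f(z)/Im z < ∞. Then lim_{y↓0} Im f(α+iy)/y = c, and moreover lim_{y↓0} (Re f(α+iy) − f(α))/y = 0, so lim_{y↓0} (f(α+iy) − f(α))/(iy) = c. -/
open Filter Topology

section JuliaCaratheodoryAux
open Complex Metric

lemma lemA (v u : ℂ) (hv : 0 < v.im) (hu : 0 < u.im) :
    ‖(v - (starRingEnd ℂ) u)‖ ≠ 0 ∧ ‖(v - u)‖ < ‖(v - (starRingEnd ℂ) u)‖ := by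
  constructor
  · simp only [ne_eq, norm_eq_zero, sub_eq_zero]
    intro h
    have : v.im = -u.im := by rw [h]; simp
    linarith
  · have h : Complex.normSq (v - u) < Complex.normSq (v - (starRingEnd ℂ) u) := by
      simp [Complex.normSq_apply, Complex.sub_re, Complex.sub_im]
      nlinarith
    simpa [Complex.norm_def] using Real.sqrt_lt_sqrt (Complex.normSq_nonneg _) h

lemma lemC (v u : ℂ) :
    (‖(v - (starRingEnd ℂ) u)‖)^2 - (‖(v - u)‖)^2 = 4 * v.im * u.im := by
  simp [Complex.sq_norm, Complex.normSq_apply, Complex.sub_re, Complex.sub_im]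
  ring

lemma subconj_ne (v u : ℂ) (hv : 0 < v.im) (hu : 0 < u.im) : v - (starRingEnd ℂ) u ≠ 0 := by
  intro h
  rw [sub_eq_zero] at h
  have : v.im = -u.im := by rw [h]; simp
  linarith

lemma pick (f : ℂ → ℂ) (hf : DifferentiableOn ℂ f {z : ℂ | 0 < z.im})
    (hmap : ∀ z : ℂ, 0 < z.im → 0 < (f z).im) {z w : ℂ} (hz : 0 < z.im) (hw : 0 < w.im) :
    ‖((f z - f w) / (f z - (starRingEnd ℂ) (f w)))‖ ≤
      ‖((z - w) / (z - (starRingEnd ℂ) w))‖ := by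
  set β := f w with hβ
  have hβim : 0 < β.im := hmap w hw
  set φ : ℂ → ℂ := fun ζ => (w - (starRingEnd ℂ) w * ζ) / (1 - ζ) with hφdef
  set g : ℂ → ℂ := fun ζ => (f (φ ζ) - β) / (f (φ ζ) - (starRingEnd ℂ) β) with hgdef
  have h1 : ∀ ζ ∈ ball (0:ℂ) 1, 0 < (φ ζ).im := by
    intro ζ hζ
    rw [mem_ball_zero_iff] at hζ
    have hns : Complex.normSq ζ < 1 := by
      rw [← Complex.sq_norm]; nlinarith [norm_nonneg ζ]
    have hden : (1 - ζ) ≠ 0 := by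
      intro h; rw [sub_eq_zero] at h; rw [← h] at hζ; simp at hζ
    simp only [hφdef]
    rw [Complex.div_im, div_sub_div_same]
    apply div_pos
    · simp [Complex.sub_re, Complex.sub_im, Complex.mul_re, Complex.mul_im,
        Complex.normSq_apply] at hns ⊢
      nlinarith
    · exact Complex.normSq_pos.2 hden
  have hφdiff : DifferentiableOn ℂ φ (ball (0:ℂ) 1) := by
    apply DifferentiableOn.div
    · exact ((differentiable_const _).sub ((differentiable_id).const_mul _)).differentiableOn
    · exact ((differentiable_const _).sub differentiable_id).differentiableOn
    · intro ζ hζ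
      rw [mem_ball_zero_iff] at hζ
      intro h; rw [sub_eq_zero] at h; rw [← h] at hζ; simp at hζ
  have hfφ : DifferentiableOn ℂ (fun ζ => f (φ ζ)) (ball (0:ℂ) 1) :=
    hf.comp hφdiff (fun ζ hζ => h1 ζ hζ)
  have hgdiff : DifferentiableOn ℂ g (ball (0:ℂ) 1) := by
    apply DifferentiableOn.div
    · exact hfφ.sub (differentiableOn_const _)
    · exact hfφ.sub (differentiableOn_const _)
    · exact fun ζ hζ => subconj_ne _ _ (hmap _ (h1 ζ hζ)) hβim
  have hmaps : Set.MapsTo g (ball (0:ℂ) 1) (ball (0:ℂ) 1) := by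
    intro ζ hζ
    rw [mem_ball_zero_iff]
    obtain ⟨hne, hlt⟩ := lemA (f (φ ζ)) β (hmap _ (h1 ζ hζ)) hβim
    simp only [hgdef, norm_div]
    rw [div_lt_one (lt_of_le_of_ne (norm_nonneg _) (Ne.symm hne))]
    exact hlt
  have hg0 : g 0 = 0 := by
    have : φ 0 = w := by simp [hφdef]
    simp [hgdef, this, ← hβ]
  set ζ₀ : ℂ := (z - w) / (z - (starRingEnd ℂ) w) with hζ₀def
  have hzw : z - (starRingEnd ℂ) w ≠ 0 := subconj_ne z w hz hw
  have hζ₀ : ‖ζ₀‖ < 1 := by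
    obtain ⟨hne, hlt⟩ := lemA z w hz hw
    rw [hζ₀def, norm_div, div_lt_one (lt_of_le_of_ne (norm_nonneg _) (Ne.symm hne))]
    exact hlt
  have key := Complex.norm_le_norm_of_mapsTo_ball hgdiff (hmaps.mono_right ball_subset_closedBall) hg0 hζ₀
  have hφζ₀ : φ ζ₀ = z := by
    have hwconj : w - (starRingEnd ℂ) w ≠ 0 := by
      intro h
      have h2 := congrArg Complex.im h
      simp [Complex.sub_im, Complex.conj_im] at h2
      linarith
    have hden1 : 1 - ζ₀ = (w - (starRingEnd ℂ) w) / (z - (starRingEnd ℂ) w) := by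
      rw [hζ₀def]; field_simp; ring
    have hden1' : 1 - ζ₀ ≠ 0 := by rw [hden1]; exact div_ne_zero hwconj hzw
    simp only [hφdef]
    rw [div_eq_iff hden1', hden1, hζ₀def]
    field_simp
    ring
  rw [hgdef] at key
  simp only [hφζ₀] at key
  exact key

lemma pickK (f : ℂ → ℂ) (hf : DifferentiableOn ℂ f {z : ℂ | 0 < z.im})
    (hmap : ∀ z : ℂ, 0 < z.im → 0 < (f z).im) {z w : ℂ} (hz : 0 < z.im) (hw : 0 < w.im) :
    z.im * w.im * (‖(f z - (starRingEnd ℂ) (f w))‖)^2 ≤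
      (f z).im * (f w).im * (‖(z - (starRingEnd ℂ) w)‖)^2 := by
  obtain ⟨hbne, hab⟩ := lemA (f z) (f w) (hmap z hz) (hmap w hw)
  obtain ⟨hbne', hab'⟩ := lemA z w hz hw
  set a := ‖(f z - f w)‖
  set b := ‖(f z - (starRingEnd ℂ) (f w))‖
  set a' := ‖(z - w)‖
  set b' := ‖(z - (starRingEnd ℂ) w)‖
  have hb : 0 < b := lt_of_le_of_ne (norm_nonneg _) (Ne.symm hbne)
  have hb' : 0 < b' := lt_of_le_of_ne (norm_nonneg _) (Ne.symm hbne')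
  have hp := pick f hf hmap hz hw
  rw [norm_div, norm_div] at hp
  have h1 : a * b' ≤ a' * b := (div_le_div_iff₀ hb hb').mp hp
  have h2 : (a * b')^2 ≤ (a' * b)^2 := by
    apply pow_le_pow_left₀ (by positivity) h1
  have hC1 := lemC (f z) (f w)
  have hC2 := lemC z w
  nlinarith [h2, hC1, hC2, sq_nonneg a, sq_nonneg a', sq_nonneg b, sq_nonneg b']

lemma julia (f : ℂ → ℂ) (hf : DifferentiableOn ℂ f {z : ℂ | 0 < z.im})
    (hmap : ∀ z : ℂ, 0 < z.im → 0 < (f z).im) (α c : ℝ)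
    (hc : Filter.liminf (fun z : ℂ => (((f z).im / z.im : ℝ) : EReal))
        (𝓝[{z : ℂ | 0 < z.im}] (α : ℂ)) = (c : EReal)) :
    0 ≤ c ∧ ∃ β : ℝ, ∀ y : ℝ, 0 < y →
      (‖(f (α + y * Complex.I) - β)‖)^2 ≤ c * y * (f (α + y * Complex.I)).im := by
  set l := 𝓝[{z : ℂ | 0 < z.im}] (α : ℂ) with hl
  set u : ℂ → ℝ := fun z => (f z).im / z.im with hu
  -- extract a sequence realizing the liminf
  have hseq : ∀ n : ℕ, ∃ z : ℂ, 0 < z.im ∧ dist z (α:ℂ) < 1/(n+1) ∧ |u z - c| < 1/(n+1) := by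
    intro n
    have hε : (0:ℝ) < 1/(n+1) := by positivity
    have hfreq : ∃ᶠ z in l, ((u z : ℝ) : EReal) < ((c + 1/(n+1) : ℝ) : EReal) := by
      refine Filter.frequently_lt_of_liminf_lt Filter.isCobounded_ge_of_top ?_
      rw [hc]
      exact_mod_cast (by linarith : c < c + 1/(n+1))
    have hev : ∀ᶠ z in l, ((c - 1/(n+1) : ℝ) : EReal) < ((u z : ℝ) : EReal) := by
      refine Filter.eventually_lt_of_lt_liminf ?_ Filter.isBounded_ge_of_bot
      rw [hc]
      exact_mod_cast (by linarith : c - 1/(n+1) < c)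
    have hevH : ∀ᶠ z in l, 0 < z.im := eventually_mem_nhdsWithin
    have hevd : ∀ᶠ z in l, dist z (α:ℂ) < 1/(n+1) := by
      have : ∀ᶠ z in 𝓝 (α:ℂ), dist z (α:ℂ) < 1/(n+1) :=
        Metric.ball_mem_nhds _ hε
      exact this.filter_mono nhdsWithin_le_nhds
    obtain ⟨z, h1, h2, h3, h4⟩ := (hfreq.and_eventually (hev.and (hevH.and hevd))).exists
    refine ⟨z, h3, h4, ?_⟩
    rw [abs_sub_lt_iff]
    constructor
    · have := EReal.coe_lt_coe_iff.mp h1; linarith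
    · have := EReal.coe_lt_coe_iff.mp h2; linarith
  choose zs hz1 hz2 hz3 using hseq
  have hrecip : Tendsto (fun n : ℕ => 1/((n:ℝ)+1)) atTop (𝓝 0) :=
    tendsto_one_div_add_atTop_nhds_zero_nat
  have htend : Tendsto zs atTop (𝓝 (α:ℂ)) := by
    rw [tendsto_iff_dist_tendsto_zero]
    exact squeeze_zero (fun n => dist_nonneg) (fun n => (hz2 n).le) hrecip
  have hutend : Tendsto (fun n => u (zs n)) atTop (𝓝 c) := by
    rw [tendsto_iff_dist_tendsto_zero]
    exact squeeze_zero (fun n => dist_nonneg)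
      (fun n => by rw [Real.dist_eq]; exact (hz3 n).le) hrecip
  have him : Tendsto (fun n => (zs n).im) atTop (𝓝 0) := by
    have := (Complex.continuous_im.tendsto _).comp htend
    simpa [Function.comp_def] using this
  have hfim_eq : ∀ n, (f (zs n)).im = u (zs n) * (zs n).im := fun n =>
    (div_mul_cancel₀ _ (ne_of_gt (hz1 n))).symm
  have hfim : Tendsto (fun n => (f (zs n)).im) atTop (𝓝 0) := by
    have := hutend.mul him
    rw [mul_zero] at this
    exact this.congr (fun n => (hfim_eq n).symm)
  have hc0 : 0 ≤ c := ge_of_tendsto' hutend (fun n => (div_pos (hmap _ (hz1 n)) (hz1 n)).le)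
  -- boundedness of f (zs n)
  set z₀ : ℂ := (α:ℂ) + Complex.I with hz₀
  have hz₀im : z₀.im = 1 := by simp [hz₀]
  have hz₀pos : 0 < z₀.im := by rw [hz₀im]; norm_num
  have key : ∀ n, (‖(f z₀ - (starRingEnd ℂ) (f (zs n)))‖)^2 ≤
      (f z₀).im * u (zs n) * (‖(z₀ - (starRingEnd ℂ) (zs n))‖)^2 := by
    intro n
    have hK := pickK f hf hmap hz₀pos (hz1 n)
    rw [hz₀im, one_mul, hfim_eq n] at hK
    have him_pos := hz1 n
    nlinarith [hK, sq_nonneg (‖(f z₀ - (starRingEnd ℂ) (f (zs n)))‖)]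
  have hMtend : Tendsto (fun n => (f z₀).im * u (zs n) *
      (‖(z₀ - (starRingEnd ℂ) (zs n))‖)^2) atTop
      (𝓝 ((f z₀).im * c * (‖(z₀ - (starRingEnd ℂ) (α:ℂ))‖)^2)) := by
    apply Tendsto.mul
    · exact (tendsto_const_nhds).mul hutend
    · have hconj : Tendsto (fun n => (starRingEnd ℂ) (zs n)) atTop (𝓝 ((starRingEnd ℂ) (α:ℂ))) :=
        (Complex.continuous_conj.tendsto _).comp htend
      have : Tendsto (fun n => ‖(z₀ - (starRingEnd ℂ) (zs n))‖) atTop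
          (𝓝 (‖(z₀ - (starRingEnd ℂ) (α:ℂ))‖)) :=
        (continuous_norm.tendsto _).comp (tendsto_const_nhds.sub hconj)
      exact this.pow 2
  obtain ⟨M₀, hM₀⟩ : ∃ M₀, ∀ n, (f z₀).im * u (zs n) *
      (‖(z₀ - (starRingEnd ℂ) (zs n))‖)^2 ≤ M₀ := by
    obtain ⟨M₀, hM₀⟩ := hMtend.bddAbove_range
    exact ⟨M₀, fun n => hM₀ (Set.mem_range_self n)⟩
  have hbound : ∀ n, f (zs n) ∈ Metric.closedBall (0:ℂ) (‖(f z₀)‖ + Real.sqrt M₀) := by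
    intro n
    rw [Metric.mem_closedBall, dist_zero_right]
    have h1 : ‖(f z₀ - (starRingEnd ℂ) (f (zs n)))‖ ≤ Real.sqrt M₀ := by
      have h2 : (‖(f z₀ - (starRingEnd ℂ) (f (zs n)))‖)^2 ≤ M₀ :=
        (key n).trans (hM₀ n)
      calc ‖(f z₀ - (starRingEnd ℂ) (f (zs n)))‖
          = Real.sqrt ((‖(f z₀ - (starRingEnd ℂ) (f (zs n)))‖)^2) :=
            (Real.sqrt_sq (norm_nonneg _)).symm
        _ ≤ Real.sqrt M₀ := Real.sqrt_le_sqrt h2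
    calc ‖(f (zs n))‖ = ‖((starRingEnd ℂ) (f (zs n)))‖ :=
          (Complex.norm_conj _).symm
      _ = ‖(f z₀ + ((starRingEnd ℂ) (f (zs n)) - f z₀))‖ := by congr 1; ring
      _ ≤ ‖(f z₀)‖ + ‖((starRingEnd ℂ) (f (zs n)) - f z₀)‖ :=
          norm_add_le _ _
      _ = ‖(f z₀)‖ + ‖(f z₀ - (starRingEnd ℂ) (f (zs n)))‖ := by
          rw [norm_sub_rev]
      _ ≤ ‖(f z₀)‖ + Real.sqrt M₀ := by linarith
  obtain ⟨β', -, ψ, hψmono, hψtend⟩ :=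
    tendsto_subseq_of_bounded (Metric.isBounded_closedBall) hbound
  have hβ'im : β'.im = 0 := by
    have h1 : Tendsto (fun n => (f (zs (ψ n))).im) atTop (𝓝 β'.im) :=
      (Complex.continuous_im.tendsto _).comp hψtend
    have h2 : Tendsto (fun n => (f (zs (ψ n))).im) atTop (𝓝 0) :=
      hfim.comp hψmono.tendsto_atTop
    exact tendsto_nhds_unique h1 h2
  refine ⟨hc0, β'.re, fun y hy => ?_⟩
  have hβ'eq : β' = ((β'.re : ℝ) : ℂ) := by
    apply Complex.ext <;> simp [hβ'im]
  set z : ℂ := (α:ℂ) + y * Complex.I with hzdef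
  have hzim : z.im = y := by simp [hzdef]
  have hzpos : 0 < z.im := by rw [hzim]; exact hy
  -- per-n inequality after dividing by (zs (ψ n)).im
  have hstep : ∀ n, y * (‖(f z - (starRingEnd ℂ) (f (zs (ψ n))))‖)^2 ≤
      (f z).im * u (zs (ψ n)) * (‖(z - (starRingEnd ℂ) (zs (ψ n)))‖)^2 := by
    intro n
    have hK := pickK f hf hmap hzpos (hz1 (ψ n))
    rw [hzim, hfim_eq (ψ n)] at hK
    have him_pos := hz1 (ψ n)
    nlinarith [hK]
  -- limits of both sides
  have hconjf : Tendsto (fun n => (starRingEnd ℂ) (f (zs (ψ n)))) atTop (𝓝 ((β'.re : ℝ) : ℂ)) := by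
    have := (Complex.continuous_conj.tendsto _).comp hψtend
    rw [show (starRingEnd ℂ) β' = ((β'.re : ℝ) : ℂ) by
      rw [hβ'eq]; simp] at this
    exact this
  have hLHS : Tendsto (fun n => y * (‖(f z - (starRingEnd ℂ) (f (zs (ψ n))))‖)^2)
      atTop (𝓝 (y * (‖(f z - ((β'.re : ℝ) : ℂ))‖)^2)) := by
    apply Tendsto.const_mul
    exact (((continuous_norm.tendsto _).comp (tendsto_const_nhds.sub hconjf)).pow 2)
  have hconjz : Tendsto (fun n => (starRingEnd ℂ) (zs (ψ n))) atTop (𝓝 ((α : ℝ) : ℂ)) := by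
    have := (Complex.continuous_conj.tendsto _).comp (htend.comp hψmono.tendsto_atTop)
    rw [show (starRingEnd ℂ) ((α:ℝ):ℂ) = ((α:ℝ):ℂ) by simp] at this
    exact this
  have habs : ‖(z - ((α:ℝ):ℂ))‖ = y := by
    rw [hzdef]
    simp [abs_of_pos hy]
  have hRHS : Tendsto (fun n => (f z).im * u (zs (ψ n)) *
      (‖(z - (starRingEnd ℂ) (zs (ψ n)))‖)^2) atTop
      (𝓝 ((f z).im * c * y^2)) := by
    have h1 : Tendsto (fun n => ‖(z - (starRingEnd ℂ) (zs (ψ n)))‖) atTop (𝓝 y) := by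
      have h0 : Tendsto (fun n => ‖(z - (starRingEnd ℂ) (zs (ψ n)))‖) atTop
          (𝓝 (‖(z - ((α:ℝ):ℂ))‖)) :=
        (continuous_norm.tendsto _).comp ((tendsto_const_nhds (x := z)).sub hconjz)
      rwa [habs] at h0
    exact (tendsto_const_nhds.mul (hutend.comp hψmono.tendsto_atTop)).mul (h1.pow 2)
  have hfinal := le_of_tendsto_of_tendsto' hLHS hRHS hstep
  nlinarith [hfinal, hy]

end JuliaCaratheodoryAux

open Complex Metric in
/-- Let `f : ℂ⁺ → ℂ⁺` be analytic and `α ∈ ℝ` with `c = liminf_{z→α} Im f(z)/Im z < ∞`.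
Then `lim_{y↓0} Im f(α+iy)/y = c`, the boundary value `f(α) = lim_{y↓0} f(α+iy)` exists and
is real, `lim_{y↓0} (Re f(α+iy) − f(α))/y = 0`, and `lim_{y↓0} (f(α+iy) − f(α))/(iy) = c`. -/
theorem stmt_15 (f : ℂ → ℂ)
    (hf : DifferentiableOn ℂ f {z : ℂ | 0 < z.im})
    (hmap : ∀ z : ℂ, 0 < z.im → 0 < (f z).im)
    (α : ℝ) (c : ℝ)
    (hc : Filter.liminf (fun z : ℂ => (((f z).im / z.im : ℝ) : EReal))
        (𝓝[{z : ℂ | 0 < z.im}] (α : ℂ)) = (c : EReal)) :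
    Tendsto (fun y : ℝ => (f (α + y * Complex.I)).im / y) (𝓝[>] 0) (𝓝 c) ∧
      ∃ L : ℝ,
        Tendsto (fun y : ℝ => f (α + y * Complex.I)) (𝓝[>] 0) (𝓝 (L : ℂ)) ∧
        Tendsto (fun y : ℝ => ((f (α + y * Complex.I)).re - L) / y) (𝓝[>] 0) (𝓝 0) ∧
        Tendsto (fun y : ℝ => (f (α + y * Complex.I) - L) / (y * Complex.I))
          (𝓝[>] 0) (𝓝 (c : ℂ)) := by
  obtain ⟨hc0, β, hJ⟩ := julia f hf hmap α c hc
  set u : ℝ → ℝ := fun y => (f (α + y * Complex.I)).im / y with hudef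
  set v : ℝ → ℝ := fun y => ((f (α + y * Complex.I)).re - β) / y with hvdef
  have himz : ∀ y : ℝ, ((α:ℂ) + y * Complex.I).im = y := by intro y; simp
  have hpos : ∀ y : ℝ, 0 < y → 0 < (f (α + y * Complex.I)).im := by
    intro y hy
    exact hmap _ (by rw [himz]; exact hy)
  -- squared inequality in coordinates
  have hsq : ∀ y : ℝ, 0 < y →
      ((f (α + y * Complex.I)).re - β)^2 + ((f (α + y * Complex.I)).im)^2 ≤
        c * y * (f (α + y * Complex.I)).im := by
    intro y hy
    have h := hJ y hy
    rw [Complex.sq_norm, Complex.normSq_apply] at h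
    simp only [Complex.sub_re, Complex.sub_im, Complex.ofReal_re, Complex.ofReal_im,
      sub_zero] at h
    nlinarith [h]
  have hule : ∀ y : ℝ, 0 < y → u y ≤ c := by
    intro y hy
    have h1 := hsq y hy
    have h2 := hpos y hy
    rw [hudef]
    rw [div_le_iff₀ hy]
    nlinarith
  have hupos : ∀ y : ℝ, 0 < y → 0 < u y := fun y hy => div_pos (hpos y hy) hy
  -- tendsto of the map y ↦ α + y I into the within-filter
  have hmapto : Tendsto (fun y : ℝ => (α:ℂ) + y * Complex.I) (𝓝[>] 0)
      (𝓝[{z : ℂ | 0 < z.im}] (α:ℂ)) := by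
    apply tendsto_nhdsWithin_of_tendsto_nhds_of_eventually_within
    · have hcont : Continuous (fun y : ℝ => (α:ℂ) + y * Complex.I) := by continuity
      have h0 : Tendsto (fun y : ℝ => (α:ℂ) + y * Complex.I) (𝓝[>] (0:ℝ))
          (𝓝 ((α:ℂ) + (0:ℝ) * Complex.I)) :=
        (hcont.tendsto 0).mono_left nhdsWithin_le_nhds
      simpa using h0
    · filter_upwards [self_mem_nhdsWithin] with y hy
      simp only [Set.mem_setOf_eq, himz]
      exact hy
  -- Part 1 : u → c
  have part1 : Tendsto u (𝓝[>] 0) (𝓝 c) := by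
    rw [tendsto_order]
    constructor
    · intro a ha
      have hev : ∀ᶠ z in 𝓝[{z : ℂ | 0 < z.im}] (α:ℂ),
          ((a:ℝ):EReal) < (((f z).im / z.im : ℝ) : EReal) :=
        Filter.eventually_lt_of_lt_liminf (by rw [hc]; exact_mod_cast ha)
          Filter.isBounded_ge_of_bot
      filter_upwards [hmapto.eventually hev, self_mem_nhdsWithin] with y hy hy2
      rw [himz] at hy
      exact EReal.coe_lt_coe_iff.mp hy
    · intro a ha
      filter_upwards [self_mem_nhdsWithin] with y hy
      exact lt_of_le_of_lt (hule y hy) ha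
  have part2 : Tendsto (fun y : ℝ => f (α + y * Complex.I)) (𝓝[>] 0) (𝓝 ((β:ℝ) : ℂ)) := by
    have hdist : ∀ y : ℝ, 0 < y → ‖(f (α + y * Complex.I) - β)‖ ≤ c * y := by
      intro y hy
      have h1 := hJ y hy
      have h2 : (f (α + y * Complex.I)).im ≤ c * y := by
        have := hsq y hy
        have h3 := hpos y hy
        nlinarith
      have h4 := hpos y hy
      have h5 : 0 ≤ c * y := by positivity
      nlinarith [norm_nonneg (f (α + y * Complex.I) - (β:ℂ))]
    rw [tendsto_iff_dist_tendsto_zero]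
    have hg : Tendsto (fun y : ℝ => c * y) (𝓝[>] 0) (𝓝 0) := by
      have : Tendsto (fun y : ℝ => c * y) (𝓝 (0:ℝ)) (𝓝 (c * 0)) :=
        (continuous_const.mul continuous_id).tendsto 0
      rw [mul_zero] at this
      exact this.mono_left nhdsWithin_le_nhds
    refine squeeze_zero' (Filter.Eventually.of_forall (fun y => dist_nonneg)) ?_ hg
    filter_upwards [self_mem_nhdsWithin] with y hy
    rw [Complex.dist_eq]
    exact hdist y hy
  have part3 : Tendsto v (𝓝[>] 0) (𝓝 0) := by
    have hv2 : ∀ y : ℝ, 0 < y → (v y)^2 ≤ u y * (c - u y) := by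
      intro y hy
      have h1 := hsq y hy
      have hy2 : (0:ℝ) < y^2 := by positivity
      rw [hvdef, hudef]
      simp only [div_pow]
      have e0 : c - (f (α + y * Complex.I)).im / y = (c * y - (f (α + y * Complex.I)).im) / y := by
        field_simp
      have e1 : (f (α + y * Complex.I)).im / y * (c - (f (α + y * Complex.I)).im / y) =
          ((f (α + y * Complex.I)).im * (c * y - (f (α + y * Complex.I)).im)) / y^2 := by
        rw [e0, div_mul_div_comm, ← sq]
      rw [e1, div_le_div_iff₀ hy2 hy2]
      nlinarith
    have hv2tend : Tendsto (fun y => (v y)^2) (𝓝[>] 0) (𝓝 0) := by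
      apply squeeze_zero' (Filter.Eventually.of_forall (fun y => sq_nonneg _))
      · filter_upwards [self_mem_nhdsWithin] with y hy
        exact hv2 y hy
      · have : Tendsto (fun y => u y * (c - u y)) (𝓝[>] 0) (𝓝 (c * (c - c))) :=
          part1.mul (tendsto_const_nhds.sub part1)
        simpa using this
    have habs : Tendsto (fun y => |v y|) (𝓝[>] 0) (𝓝 0) := by
      have := (Real.continuous_sqrt.tendsto 0).comp hv2tend
      rw [Real.sqrt_zero] at this
      refine this.congr (fun y => ?_)
      simp [Real.sqrt_sq_eq_abs]
    have hneg : Tendsto (fun y => -|v y|) (𝓝[>] 0) (𝓝 0) := by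
      simpa using habs.neg
    exact tendsto_of_tendsto_of_tendsto_of_le_of_le hneg
      habs (fun y => neg_abs_le _) (fun y => le_abs_self _)
  refine ⟨part1, β, part2, part3, ?_⟩
  -- Part 4 : difference quotient → c
  have heq : ∀ᶠ y in 𝓝[>] (0:ℝ),
      ((u y : ℝ) : ℂ) - ((v y : ℝ) : ℂ) * Complex.I =
        (f (α + y * Complex.I) - β) / (y * Complex.I) := by
    filter_upwards [self_mem_nhdsWithin] with y hy
    have hyne : (y:ℝ) ≠ 0 := ne_of_gt hy
    have hyne' : ((y:ℝ):ℂ) ≠ 0 := by exact_mod_cast hyne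
    rw [eq_div_iff (mul_ne_zero hyne' Complex.I_ne_zero)]
    rw [hudef, hvdef]
    apply Complex.ext
    · simp [Complex.mul_re, Complex.mul_im, Complex.sub_re, Complex.sub_im]
      field_simp
    · simp [Complex.mul_re, Complex.mul_im, Complex.sub_re, Complex.sub_im]
      field_simp
  have hL : Tendsto (fun y : ℝ => ((u y : ℝ) : ℂ) - ((v y : ℝ) : ℂ) * Complex.I) (𝓝[>] 0)
      (𝓝 (((c:ℝ):ℂ) - ((0:ℝ):ℂ) * Complex.I)) :=
    ((Complex.continuous_ofReal.tendsto c).comp part1).sub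
      (((Complex.continuous_ofReal.tendsto 0).comp part3).mul tendsto_const_nhds)
  have hL' : Tendsto (fun y : ℝ => ((u y : ℝ) : ℂ) - ((v y : ℝ) : ℂ) * Complex.I) (𝓝[>] 0)
      (𝓝 ((c:ℝ):ℂ)) := by simpa using hL
  exact hL'.congr' heq
end
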